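/- arXiv:2206.05925 — 6 statements merged into one kernel-verified Lean document; each statement's English description precedes it below -/
import Mathlib

section
/- Let L be a perfect complex Lie algebra (i.e. L = [L, L]) and let M be an L-module such that Z_M(L) := {u ∈ M : x · u = 0 for all x ∈ L} = {0}. Then every skew-symmetric biderivation δ : L × L → M is of the form δ(x, y) = γ([x, y]) for all x, y ∈ L, where γ ∈ Cent_L(M). -/
/-!
Expanding `δ ⁅a, b⁆ ⁅c, d⁆` by the two biderivation rules in either order shows that
`⁅⁅a, c⁆, δ b d⁆ + ⁅⁅b, d⁆, δ a c⁆` is symmetric in `c, d`; three instances of this, together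
with skew-symmetry, give `⁅⁅a, b⁆, δ c d⁆ = -⁅⁅c, d⁆, δ a b⁆`. Consequently, if
`∑ ⁅xᵢ, yᵢ⁆ = 0` then `∑ δ xᵢ yᵢ` is killed by every bracket, hence by `L = [L, L]`, hence is zero:
`δ` factors through the bracket as `δ x y = γ ⁅x, y⁆`. Comparing `γ ⁅x, ⁅a, b⁆⁆ = δ x ⁅a, b⁆`
with its Leibniz expansion gives `2 γ ⁅x, u⁆ = 2 ⁅x, γ u⁆` for `u ∈ [L, L] = L`.
-/

theorem LinearMap.exists_comp_eq_of_ker_le {R M N P : Type*} [Ring R] [AddCommGroup M]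
    [AddCommGroup N] [AddCommGroup P] [Module R M] [Module R N] [Module R P]
    {f : M →ₗ[R] N} (hf : Function.Surjective f) {g : M →ₗ[R] P} (h : ker f ≤ ker g) :
    ∃ g' : N →ₗ[R] P, g' ∘ₗ f = g :=
  ⟨(ker f).liftQ g h ∘ₗ (f.quotKerEquivOfSurjective hf).symm, by ext; simp⟩

open scoped TensorProduct

section

variable {R L M : Type*} [CommRing R] [LieRing L] [LieAlgebra R L]
  [AddCommGroup M] [Module R M] [LieRingModule L M]

theorem LieModule.toModuleHom_surjective
    (hperf : Submodule.span R {z : L | ∃ x y : L, z = ⁅x, y⁆} = ⊤) :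
    Function.Surjective (LieModule.toModuleHom R L L) := by
  rw [← LieModuleHom.coe_toLinearMap, ← LinearMap.range_eq_top, eq_top_iff, ← hperf,
    Submodule.span_le]
  rintro _ ⟨x, y, rfl⟩
  exact ⟨x ⊗ₜ y, LieModule.toModuleHom_apply R L L x y⟩

theorem eq_zero_of_forall_lie_lie_eq_zero [LieModule R L M]
    (hperf : Submodule.span R {z : L | ∃ x y : L, z = ⁅x, y⁆} = ⊤)
    (hZ : ∀ u : M, (∀ x : L, ⁅x, u⁆ = 0) → u = 0) {u : M} (hu : ∀ x y : L, ⁅⁅x, y⁆, u⁆ = 0) :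
    u = 0 := by
  refine hZ u fun c => ?_
  have hc : c ∈ Submodule.span R _ := hperf ▸ Submodule.mem_top
  induction hc using Submodule.span_induction with
  | mem _ hc => obtain ⟨x, y, rfl⟩ := hc; exact hu x y
  | zero => exact zero_lie u
  | add _ _ _ _ ha hb => rw [add_lie, ha, hb, add_zero]
  | smul r _ _ ha => rw [smul_lie, ha, smul_zero]

structure IsBiderivation (δ : L →ₗ[R] L →ₗ[R] M) : Prop where
  apply_lie_left : ∀ x y z : L, δ ⁅x, y⁆ z = ⁅x, δ y z⁆ - ⁅y, δ x z⁆
  apply_lie_right : ∀ x y z : L, δ x ⁅y, z⁆ = ⁅y, δ x z⁆ - ⁅z, δ x y⁆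

namespace IsBiderivation

variable {δ : L →ₗ[R] L →ₗ[R] M}

theorem lie_lie_add_lie_lie_comm (hδ : IsBiderivation δ) (a b c d : L) :
    ⁅⁅a, c⁆, δ b d⁆ + ⁅⁅b, d⁆, δ a c⁆ = ⁅⁅a, d⁆, δ b c⁆ + ⁅⁅b, c⁆, δ a d⁆ := by
  have h := (hδ.apply_lie_left a b ⁅c, d⁆).symm.trans (hδ.apply_lie_right ⁅a, b⁆ c d)
  rw [hδ.apply_lie_right b c d, hδ.apply_lie_right a c d, hδ.apply_lie_left a b c,
    hδ.apply_lie_left a b d] at h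
  simp only [lie_sub] at h
  simp only [lie_lie]
  linear_combination (norm := abel) h

theorem lie_lie_add_lie_lie_eq_zero [IsAddTorsionFree M] (hδ : IsBiderivation δ)
    (hskew : ∀ x y : L, δ x y = -δ y x) (a b c d : L) :
    ⁅⁅a, b⁆, δ c d⁆ + ⁅⁅c, d⁆, δ a b⁆ = 0 := by
  have swap (p q r s : L) :
      ⁅⁅p, q⁆, δ s r⁆ + ⁅⁅s, r⁆, δ p q⁆ = -(⁅⁅p, q⁆, δ r s⁆ + ⁅⁅r, s⁆, δ p q⁆) := by
    rw [hskew s r, ← lie_skew s r, lie_neg, neg_lie, neg_add]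
  rw [← self_eq_neg]
  calc ⁅⁅a, b⁆, δ c d⁆ + ⁅⁅c, d⁆, δ a b⁆
      = ⁅⁅a, d⁆, δ c b⁆ + ⁅⁅c, b⁆, δ a d⁆ := hδ.lie_lie_add_lie_lie_comm a c b d
    _ = -(⁅⁅a, d⁆, δ b c⁆ + ⁅⁅b, c⁆, δ a d⁆) := swap a d b c
    _ = -(⁅⁅a, c⁆, δ b d⁆ + ⁅⁅b, d⁆, δ a c⁆) := by rw [hδ.lie_lie_add_lie_lie_comm a b c d]
    _ = ⁅⁅a, c⁆, δ d b⁆ + ⁅⁅d, b⁆, δ a c⁆ := (swap a c b d).symm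
    _ = ⁅⁅a, b⁆, δ d c⁆ + ⁅⁅d, c⁆, δ a b⁆ := hδ.lie_lie_add_lie_lie_comm a d c b
    _ = -(⁅⁅a, b⁆, δ c d⁆ + ⁅⁅c, d⁆, δ a b⁆) := swap a b c d

theorem lie_lie_lift_apply [IsAddTorsionFree M] (hδ : IsBiderivation δ)
    (hskew : ∀ x y : L, δ x y = -δ y x) (t : L ⊗[R] L) (z w : L) :
    ⁅⁅z, w⁆, TensorProduct.lift δ t⁆ = -⁅LieModule.toModuleHom R L L t, δ z w⁆ := by
  induction t using TensorProduct.induction_on with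
  | zero => simp
  | tmul x y =>
    rw [TensorProduct.lift.tmul, LieModule.toModuleHom_apply, eq_neg_iff_add_eq_zero, add_comm]
    exact hδ.lie_lie_add_lie_lie_eq_zero hskew x y z w
  | add t u ht hu => rw [map_add, map_add, lie_add, add_lie, ht, hu, neg_add]

theorem exists_apply_eq_map_lie [LieModule R L M] [IsAddTorsionFree M] (hδ : IsBiderivation δ)
    (hskew : ∀ x y : L, δ x y = -δ y x)
    (hperf : Submodule.span R {z : L | ∃ x y : L, z = ⁅x, y⁆} = ⊤)
    (hZ : ∀ u : M, (∀ x : L, ⁅x, u⁆ = 0) → u = 0) :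
    ∃ γ : L →ₗ[R] M, ∀ x y : L, δ x y = γ ⁅x, y⁆ := by
  have hker : LinearMap.ker (LieModule.toModuleHom R L L : L ⊗[R] L →ₗ[R] L) ≤
      LinearMap.ker (TensorProduct.lift δ) := fun t ht =>
    eq_zero_of_forall_lie_lie_eq_zero hperf hZ fun z w => by
      rw [hδ.lie_lie_lift_apply hskew, show LieModule.toModuleHom R L L t = 0 from ht, zero_lie,
        neg_zero]
  obtain ⟨γ, hγ⟩ :=
    LinearMap.exists_comp_eq_of_ker_le (LieModule.toModuleHom_surjective hperf) hker
  exact ⟨γ, fun x y => by simpa using (LinearMap.congr_fun hγ (x ⊗ₜ y)).symm⟩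

theorem map_lie_of_apply_eq [LieModule R L M] [IsAddTorsionFree M] (hδ : IsBiderivation δ)
    (hperf : Submodule.span R {z : L | ∃ x y : L, z = ⁅x, y⁆} = ⊤) {γ : L →ₗ[R] M}
    (hγ : ∀ x y : L, δ x y = γ ⁅x, y⁆) (x y : L) : γ ⁅x, y⁆ = ⁅x, γ y⁆ := by
  have on_lie (a b : L) : γ ⁅x, ⁅a, b⁆⁆ = ⁅x, γ ⁅a, b⁆⁆ := by
    have hleibniz : γ ⁅x, ⁅a, b⁆⁆ = δ ⁅x, a⁆ b + δ a ⁅x, b⁆ := by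
      rw [leibniz_lie, map_add, hγ, hγ]
    have hax : δ a x = -δ x a := by rw [hγ, hγ, ← lie_skew, map_neg]
    have h₁ := hδ.apply_lie_left x a b
    have h₂ := hδ.apply_lie_right a x b
    have h₃ := hδ.apply_lie_right x a b
    rw [hax, lie_neg] at h₂
    rw [← sub_eq_zero, ← self_eq_neg, ← hγ a b]
    linear_combination (norm := abel) hleibniz + h₁ + h₂ + h₃ - hγ x ⁅a, b⁆
  have hext : γ ∘ₗ LieAlgebra.ad R L x = (LieModule.toEnd R L M x : M →ₗ[R] M) ∘ₗ γ := by
    refine LinearMap.ext_on hperf ?_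
    rintro _ ⟨a, b, rfl⟩
    simpa using on_lie a b
  simpa using LinearMap.congr_fun hext y

end IsBiderivation

end

theorem perfect_skew_biderivation
    (L : Type) [LieRing L] [LieAlgebra ℂ L]
    (hperf : Submodule.span ℂ {z : L | ∃ x y : L, z = ⁅x, y⁆} = ⊤)
    (M : Type) [AddCommGroup M] [Module ℂ M] [LieRingModule L M] [LieModule ℂ L M]
    (hZ : ∀ u : M, (∀ x : L, ⁅x, u⁆ = 0) → u = 0)
    (δ : L →ₗ[ℂ] L →ₗ[ℂ] M)
    (hbd1 : ∀ x y z : L, δ ⁅x, y⁆ z = ⁅x, δ y z⁆ - ⁅y, δ x z⁆)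
    (hbd2 : ∀ x y z : L, δ x ⁅y, z⁆ = ⁅y, δ x z⁆ - ⁅z, δ x y⁆)
    (hskewsym : ∀ x y : L, δ x y = -δ y x) :
    ∃ γ : L →ₗ[ℂ] M, (∀ x y : L, γ ⁅x, y⁆ = ⁅x, γ y⁆) ∧ ∀ x y : L, δ x y = γ ⁅x, y⁆ := by
  have : IsAddTorsionFree M := .of_isTorsionFree ℂ M
  have hδ : IsBiderivation δ := ⟨hbd1, hbd2⟩
  obtain ⟨γ, hγ⟩ := hδ.exists_apply_eq_map_lie hskewsym hperf hZ
  exact ⟨γ, hδ.map_lie_of_apply_eq hperf hγ, hγ⟩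
end

section
/- Let b ∈ ℂ. If b = −1, then Cent_Vir(F_b) = ℂε, i.e. a linear map γ : Vir → F_b satisfies γ([x,y]) = x · γ(y) for all x, y ∈ Vir if and only if γ is a scalar multiple of ε; if b ≠ −1, then Cent_Vir(F_b) = {0}. -/
/-! `L 0` acts on `F_b` diagonally with pairwise distinct eigenvalues `-i`, and a map `γ` with
`γ ⁅x, y⁆ = ⁅x, γ y⁆` commutes with the action of `L 0`, so `γ (L n) = c n • v n` and
`γ C = a • v 0`. Evaluating `γ ⁅L m, L n⁆ = ⁅L m, γ (L n)⁆` gives a scalar relation between the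
`c n` and `a`; its instances `(m, 0)`, `(1, 1)`, `(1, -1)` and `(2, -2)` force `c n = c 0` for all
`n`, `a = 0` and `(1 + b) c 0 = 0`. Hence `γ = c 0 • ε`, which vanishes unless `b = -1`;
conversely, for `b = -1` the map `ε` satisfies the identity, as one checks on basis vectors. -/

open LieModule

namespace Module.Basis

variable {ι R M : Type*} [CommRing R] [AddCommGroup M] [Module R M]

theorem repr_apply_eq_mul_of_apply_eq_smul (b : Basis ι R M) {T : M →ₗ[R] M} {f : ι → R}
    (hT : ∀ i, T (b i) = f i • b i) (w : M) (i : ι) :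
    b.repr (T w) i = f i * b.repr w i := by
  have hcoord : Finsupp.lapply i ∘ₗ b.repr.toLinearMap ∘ₗ T =
      f i • (Finsupp.lapply i ∘ₗ b.repr.toLinearMap) := by
    refine b.ext fun j => ?_
    obtain rfl | hji := eq_or_ne j i <;> simp [*]
  exact LinearMap.congr_fun hcoord w

theorem eq_repr_smul_of_apply_eq_smul [IsDomain R] (b : Basis ι R M) {T : M →ₗ[R] M}
    {f : ι → R} (hf : Function.Injective f) (hT : ∀ i, T (b i) = f i • b i) {w : M} {n : ι}
    (hw : T w = f n • w) : w = b.repr w n • b n := by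
  refine b.repr.injective (Finsupp.ext fun i => ?_)
  obtain rfl | hin := eq_or_ne i n
  · simp
  · have h := b.repr_apply_eq_mul_of_apply_eq_smul hT w i
    rw [hw, map_smul, Finsupp.smul_apply, smul_eq_mul] at h
    have h' : (f n - f i) * b.repr w i = 0 := by linear_combination h
    simpa [Finsupp.single_apply, hin.symm] using
      (mul_eq_zero.mp h').resolve_left (sub_ne_zero.mpr (hf.ne hin.symm))

end Module.Basis

theorem LinearMap.map_lie_of_basis {ι R L M : Type*} [CommRing R] [LieRing L] [LieAlgebra R L]
    [AddCommGroup M] [Module R M] [LieRingModule L M] [LieModule R L M]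
    (bL : Module.Basis ι R L) (φ : L →ₗ[R] M)
    (h : ∀ s t, φ ⁅bL s, bL t⁆ = ⁅bL s, φ (bL t)⁆) (x y : L) : φ ⁅x, y⁆ = ⁅x, φ y⁆ := by
  have : (toEnd R L L : L →ₗ[R] Module.End R L).compr₂ φ =
      (toEnd R L M : L →ₗ[R] Module.End R M).compl₂ φ := LinearMap.ext_basis bL bL h
  exact LinearMap.congr_fun₂ this x y

theorem coeffs_eq_of_density_relation {b a : ℂ} {c : ℤ → ℂ}
    (h : ∀ m n : ℤ, ((m : ℂ) - n) * c (m + n) +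
      (if m + n = 0 then ((m : ℂ) ^ 3 - m) / 12 else 0) * a = -((n : ℂ) + b * m) * c n) :
    a = 0 ∧ (∀ m, c m = c 0) ∧ (1 + b) * c 0 = 0 := by
  have hc : ∀ m : ℤ, m ≠ 0 → c m = -b * c 0 := fun m hm => by
    have h' := h m 0
    simp only [add_zero, Int.cast_zero, sub_zero, if_neg hm, zero_mul, zero_add] at h'
    exact mul_left_cancel₀ (Int.cast_ne_zero.mpr hm) (by linear_combination h')
  have h11 := h 1 1
  have h1m1 := h 1 (-1)
  have h2m2 := h 2 (-2)
  rw [if_neg (by norm_num), hc 1 one_ne_zero] at h11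
  rw [if_pos (by norm_num), hc (-1) (by norm_num), show (1 : ℤ) + -1 = 0 by norm_num] at h1m1
  rw [if_pos (by norm_num), hc (-2) (by norm_num), show (2 : ℤ) + -2 = 0 by norm_num] at h2m2
  push_cast at h11 h1m1 h2m2
  have hb : (1 + b) * c 0 = 0 := by linear_combination (h1m1 - h11) / 2
  refine ⟨by linear_combination 2 * h2m2 + 4 * (b - 2) * hb, fun m => ?_, hb⟩
  obtain rfl | hm := eq_or_ne m 0
  · rfl
  · linear_combination hc m hm - hb

section Virasoro

variable {V M : Type*} [LieRing V] [LieAlgebra ℂ V] [AddCommGroup M] [Module ℂ M]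
  [LieRingModule V M] [LieModule ℂ V M]

theorem eq_repr_smul_of_lie_eq_neg_smul (bM : Module.Basis ℤ ℂ M) {x : V}
    (hx : ∀ i, ⁅x, bM i⁆ = (-(i : ℂ)) • bM i) {w : M} {n : ℤ} (hw : ⁅x, w⁆ = (-(n : ℂ)) • w) :
    w = bM.repr w n • bM n :=
  bM.eq_repr_smul_of_apply_eq_smul (T := toEnd ℂ V M x)
    (neg_injective.comp Int.cast_injective) hx hw

variable {L : ℤ → V} {Cc : V} {bM : Module.Basis ℤ ℂ M} {b : ℂ}

theorem density_relation_of_map_lie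
    (hLL : ∀ m n : ℤ, ⁅L m, L n⁆ = ((m : ℂ) - n) • L (m + n) +
      (if m + n = 0 then ((m : ℂ) ^ 3 - m) / 12 else 0) • Cc)
    (hLv : ∀ m i : ℤ, ⁅L m, bM i⁆ = (-((i : ℂ) + b * m)) • bM (m + i))
    {γ : V →ₗ[ℂ] M} (hγ : ∀ x y : V, γ ⁅x, y⁆ = ⁅x, γ y⁆) {c : ℤ → ℂ} {a : ℂ}
    (hγL : ∀ n, γ (L n) = c n • bM n) (hγC : γ Cc = a • bM 0) (m n : ℤ) :
    ((m : ℂ) - n) * c (m + n) + (if m + n = 0 then ((m : ℂ) ^ 3 - m) / 12 else 0) * a =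
      -((n : ℂ) + b * m) * c n := by
  have h := congrArg (fun w => bM.repr w (m + n)) (hγ (L m) (L n))
  simp only [hLL, hγL, hγC, hLv, map_add, map_smul, lie_smul, bM.repr_self, Finsupp.add_apply,
    Finsupp.smul_apply, Finsupp.single_eq_same, smul_eq_mul, mul_one] at h
  split_ifs at h ⊢ with hmn
  · simp only [hmn, Finsupp.single_eq_same] at h ⊢
    linear_combination h
  · simp only [zero_mul, add_zero] at h
    linear_combination h

theorem exists_eq_smul_of_map_lie (bV : Module.Basis (ℤ ⊕ Unit) ℂ V)
    (hLdef : ∀ m : ℤ, L m = bV (Sum.inl m)) (hCdef : Cc = bV (Sum.inr ()))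
    (hLL : ∀ m n : ℤ, ⁅L m, L n⁆ = ((m : ℂ) - n) • L (m + n) +
      (if m + n = 0 then ((m : ℂ) ^ 3 - m) / 12 else 0) • Cc)
    (hLC : ∀ m : ℤ, ⁅L m, Cc⁆ = 0)
    (hLv : ∀ m i : ℤ, ⁅L m, bM i⁆ = (-((i : ℂ) + b * m)) • bM (m + i))
    {ε : V →ₗ[ℂ] M} (hεL : ∀ m : ℤ, ε (L m) = bM m) (hεC : ε Cc = 0)
    {γ : V →ₗ[ℂ] M} (hγ : ∀ x y : V, γ ⁅x, y⁆ = ⁅x, γ y⁆) :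
    ∃ c : ℂ, γ = c • ε ∧ (1 + b) * c = 0 := by
  have hL0 : ∀ i : ℤ, ⁅L 0, bM i⁆ = (-(i : ℂ)) • bM i := fun i => by simpa using hLv 0 i
  set c : ℤ → ℂ := fun n => bM.repr (γ (L n)) n
  set a : ℂ := bM.repr (γ Cc) 0
  have hγL : ∀ n, γ (L n) = c n • bM n := fun n =>
    eq_repr_smul_of_lie_eq_neg_smul bM hL0 (by simp [← hγ, hLL])
  have hγC : γ Cc = a • bM 0 :=
    eq_repr_smul_of_lie_eq_neg_smul bM hL0 (by simp [← hγ, hLC])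
  obtain ⟨ha, hc, hb⟩ :=
    coeffs_eq_of_density_relation (density_relation_of_map_lie hLL hLv hγ hγL hγC)
  refine ⟨c 0, bV.ext ?_, hb⟩
  rintro (m | ⟨⟩)
  · rw [← hLdef, hγL, hc, LinearMap.smul_apply, hεL]
  · rw [← hCdef, hγC, ha, LinearMap.smul_apply, hεC, zero_smul, smul_zero]

theorem map_lie_of_density_neg_one (bV : Module.Basis (ℤ ⊕ Unit) ℂ V)
    (hLdef : ∀ m : ℤ, L m = bV (Sum.inl m)) (hCdef : Cc = bV (Sum.inr ()))
    (hLL : ∀ m n : ℤ, ⁅L m, L n⁆ = ((m : ℂ) - n) • L (m + n) +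
      (if m + n = 0 then ((m : ℂ) ^ 3 - m) / 12 else 0) • Cc)
    (hLC : ∀ m : ℤ, ⁅L m, Cc⁆ = 0)
    (hLv : ∀ m i : ℤ, ⁅L m, bM i⁆ = (-((i : ℂ) + -1 * m)) • bM (m + i))
    (hCv : ∀ i : ℤ, ⁅Cc, bM i⁆ = 0)
    {ε : V →ₗ[ℂ] M} (hεL : ∀ m : ℤ, ε (L m) = bM m) (hεC : ε Cc = 0) (x y : V) :
    ε ⁅x, y⁆ = ⁅x, ε y⁆ := by
  refine ε.map_lie_of_basis bV ?_ x y
  rintro (m | ⟨⟩) (n | ⟨⟩) <;> simp only [← hLdef, ← hCdef]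
  · rw [hLL, map_add, map_smul, map_smul, hεL, hεL, hεC, hLv, smul_zero, add_zero]
    congr 1
    ring
  · rw [hLC, map_zero, hεC, lie_zero]
  · rw [← lie_skew, hLC, neg_zero, map_zero, hεL, hCv]
  · rw [lie_self, map_zero, hεC, lie_zero]

end Virasoro

theorem centroid_Vir_density
(b : ℂ)
    (V : Type) [LieRing V] [LieAlgebra ℂ V]
    (bV : Module.Basis (ℤ ⊕ Unit) ℂ V)
    (L : ℤ → V) (Cc : V)
    (hLdef : ∀ m : ℤ, L m = bV (Sum.inl m))
    (hCdef : Cc = bV (Sum.inr ()))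
    (hLL : ∀ m n : ℤ, ⁅L m, L n⁆ = ((m : ℂ) - n) • L (m + n) +
      (if m + n = 0 then ((m : ℂ) ^ 3 - m) / 12 else 0) • Cc)
    (hLC : ∀ m : ℤ, ⁅L m, Cc⁆ = 0)
    (M : Type) [AddCommGroup M] [Module ℂ M] [LieRingModule V M] [LieModule ℂ V M]
    (bM : Module.Basis ℤ ℂ M) (v : ℤ → M) (hvdef : ∀ i : ℤ, v i = bM i)
    (hLv : ∀ m i : ℤ, ⁅L m, v i⁆ = (-((i : ℂ) + b * m)) • v (m + i))
    (hCv : ∀ i : ℤ, ⁅Cc, v i⁆ = 0)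
    (ε : V →ₗ[ℂ] M) (hεL : ∀ m : ℤ, ε (L m) = v m) (hεC : ε Cc = 0)
    (γ : V →ₗ[ℂ] M) :
    (b = -1 → ((∀ x y : V, γ ⁅x, y⁆ = ⁅x, γ y⁆) ↔ ∃ lam : ℂ, ∀ x : V, γ x = lam • ε x)) ∧
    (b ≠ -1 → ((∀ x y : V, γ ⁅x, y⁆ = ⁅x, γ y⁆) ↔ γ = 0)) := by
  obtain rfl : v = bM := funext hvdef
  have eq_smul_ε : (∀ x y : V, γ ⁅x, y⁆ = ⁅x, γ y⁆) → ∃ c : ℂ, γ = c • ε ∧ (1 + b) * c = 0 :=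
    exists_eq_smul_of_map_lie bV hLdef hCdef hLL hLC hLv hεL hεC
  refine ⟨fun hb => ⟨fun hγ => ?_, ?_⟩, fun hb => ⟨fun hγ => ?_, ?_⟩⟩
  · obtain ⟨c, rfl, -⟩ := eq_smul_ε hγ
    exact ⟨c, fun x => rfl⟩
  · subst hb
    rintro ⟨c, hγ⟩ x y
    rw [hγ, hγ, map_lie_of_density_neg_one bV hLdef hCdef hLL hLC hLv hCv hεL hεC, lie_smul]
  · obtain ⟨c, rfl, hc⟩ := eq_smul_ε hγ
    have h1b : 1 + b ≠ 0 := fun h => hb (by linear_combination h)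
    rw [(mul_eq_zero.mp hc).resolve_left h1b, zero_smul]
  · rintro rfl x y
    simp
end

section
/- Let b ∈ ℂ and let δ : Vir × Vir → F_b be a symmetric biderivation. Then δ(x, C) = δ(C, x) = 0 for all x ∈ Vir, and there exists a finitely supported family (μ_k)_{k∈ℤ} of complex numbers such that: if b = 0, then δ(L_m, L_n) = Σ_{k∈ℤ} μ_k v_{m+n+k} for all m, n ∈ ℤ; if b = 1, then δ(L_m, L_n) = Σ_{k∈ℤ} (m + n + k)μ_k v_{m+n+k} for all m, n ∈ ℤ; and if b ∉ {0, 1}, then δ(L_m, L_n) = 0 for all m, n ∈ ℤ. -/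
/-!
Write `F m n k` for the coefficient of `v k` in `δ (L m) (L n)`. The central element acts
trivially on both sides and Vir is perfect, so `δ Cc` kills all brackets and hence vanishes; the
left Leibniz rule for `x = L m`, `y = L n`, `z = L p` then becomes a linear recursion for `F`.
Its specialisation at `n = 0` determines `F` off the diagonal from the values `F 0 0 k`, and the
remaining diagonal values `F p 0 p` are pinned down by comparing the recursion at `(n, p)` and
`(p, n)`. A function of the claimed shape satisfies the same recursion, so it suffices to match
these two families of values.
-/

theorem Module.Basis.repr_map_of_shift {R M : Type*} [CommSemiring R] [AddCommMonoid M]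
    [Module R M] (bM : Module.Basis ℤ R M) (T : M →ₗ[R] M) (m : ℤ) (c : ℤ → R)
    (hT : ∀ i, T (bM i) = c i • bM (m + i)) (w : M) (k : ℤ) :
    bM.repr (T w) k = c (k - m) * bM.repr w (k - m) := by
  have h : Finsupp.lapply k ∘ₗ bM.repr.toLinearMap ∘ₗ T
      = c (k - m) • (Finsupp.lapply (k - m) ∘ₗ bM.repr.toLinearMap) := by
    refine bM.ext fun i => ?_
    by_cases hi : m + i = k
    · subst hi
      simp [hT]
    · simp [hT, hi, show i ≠ k - m by omega]
  simpa using LinearMap.congr_fun h w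

theorem Module.Basis.repr_sum_smul_shift {R M : Type*} [CommSemiring R] [AddCommMonoid M]
    [Module R M] (bM : Module.Basis ℤ R M) (g : ℤ → R) (μ : ℤ →₀ R) (s j : ℤ) :
    bM.repr (μ.sum fun k c => (g k * c) • bM (s + k)) j = g (j - s) * μ (j - s) := by
  induction μ using Finsupp.induction_linear with
  | zero => simp
  | add f₁ f₂ h₁ h₂ =>
    rw [Finsupp.sum_add_index' (by simp) (by simp [mul_add, add_smul]), map_add,
      Finsupp.add_apply, h₁, h₂, Finsupp.add_apply, mul_add]
  | single t a =>
    rw [Finsupp.sum_single_index (by simp)]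
    by_cases ht : s + t = j
    · subst ht
      simp
    · simp [ht, show t ≠ j - s by omega]

structure LinearMap.IsBiderivation {R L M : Type*} [CommRing R] [LieRing L] [Module R L]
    [AddCommGroup M] [Module R M] [LieRingModule L M] (φ : L →ₗ[R] L →ₗ[R] M) : Prop where
  lie_left : ∀ x y z, φ ⁅x, y⁆ z = ⁅x, φ y z⁆ - ⁅y, φ x z⁆
  lie_right : ∀ x y z, φ x ⁅y, z⁆ = ⁅y, φ x z⁆ - ⁅z, φ x y⁆

theorem LinearMap.IsBiderivation.apply_lie_eq_zero_of_central {R L M : Type*} [CommRing R]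
    [LieRing L] [Module R L] [AddCommGroup M] [Module R M] [LieRingModule L M]
    {φ : L →ₗ[R] L →ₗ[R] M} (hφ : φ.IsBiderivation) {c : L} (hcL : ∀ y : L, ⁅c, y⁆ = 0)
    (hcM : ∀ w : M, ⁅c, w⁆ = 0) (y z : L) : φ c ⁅y, z⁆ = 0 := by
  have hinv : ∀ y z, ⁅y, φ c z⁆ = 0 := fun y z => by
    simpa [hcL, hcM] using hφ.lie_left c y z
  rw [hφ.lie_right, hinv, hinv, sub_zero]

theorem Module.Basis.lie_eq_zero_of_lie_apply_eq_zero {ι R L M : Type*} [CommRing R]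
    [LieRing L] [LieAlgebra R L] [AddCommGroup M] [Module R M] [LieRingModule L M]
    [LieModule R L M] (bM : Module.Basis ι R M) {x : L} (h : ∀ i, ⁅x, bM i⁆ = 0) (w : M) :
    ⁅x, w⁆ = 0 := by
  simpa using LinearMap.congr_fun (bM.ext (f₁ := LieModule.toEnd R L M x) (f₂ := 0)
    fun i => by simpa using h i) w

/-- `F m n k` models the coefficient of `v k` in `δ (L m) (L n)`; `leibniz` is the left Leibniz
rule `δ ⁅L m, L n⁆ (L p) = ⁅L m, δ (L n) (L p)⁆ - ⁅L n, δ (L m) (L p)⁆` read off at `v k`. -/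
structure IsBiderivationCoeffs (b : ℂ) (F : ℤ → ℤ → ℤ → ℂ) : Prop where
  symm : ∀ m n k, F m n k = F n m k
  leibniz : ∀ m n p k : ℤ, ((m : ℂ) - n) * F (m + n) p k =
    -((k : ℂ) - m + b * m) * F n p (k - m) + ((k : ℂ) - n + b * n) * F m p (k - n)

theorem isBiderivationCoeffs_zero_of_weight (h : ℤ → ℂ) :
    IsBiderivationCoeffs 0 fun m n k => h (k - m - n) where
  symm m n k := by rw [sub_right_comm]
  leibniz m n p k := by
    rw [show k - m - n - p = k - (m + n) - p by ring, show k - n - m - p = k - (m + n) - p by ring]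
    ring

theorem isBiderivationCoeffs_one_of_weight (μ : ℤ → ℂ) :
    IsBiderivationCoeffs 1 fun m n k => k * μ (k - m - n) where
  symm m n k := by rw [sub_right_comm]
  leibniz m n p k := by
    rw [show k - m - n - p = k - (m + n) - p by ring, show k - n - m - p = k - (m + n) - p by ring]
    push_cast
    ring

namespace IsBiderivationCoeffs

variable {b : ℂ} {F G : ℤ → ℤ → ℤ → ℂ}

theorem sub (hF : IsBiderivationCoeffs b F) (hG : IsBiderivationCoeffs b G) :
    IsBiderivationCoeffs b (F - G) where
  symm m n k := by simp only [Pi.sub_apply, hF.symm m n k, hG.symm m n k]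
  leibniz m n p k := by
    simp only [Pi.sub_apply]
    linear_combination hF.leibniz m n p k - hG.leibniz m n p k

theorem shift (hF : IsBiderivationCoeffs b F) (n p k : ℤ) :
    ((k : ℂ) - n) * F n p k = ((k : ℂ) - n + b * n) * F 0 p (k - n) := by
  have h := hF.leibniz 0 n p k
  simp only [zero_add, sub_zero, Int.cast_zero, mul_zero, add_zero] at h
  linear_combination h

theorem mul_apply_zero_left_zero (hF : IsBiderivationCoeffs b F) (p : ℤ) : b * F 0 p 0 = 0 := by
  simpa using (hF.shift 1 p 1).symm

theorem diag_relation (hF : IsBiderivationCoeffs b F) (n p : ℤ) :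
    (n : ℂ) * (p + b * n) * F p 0 p = p * (n + b * p) * F n 0 n := by
  have hn := hF.shift n p (n + p)
  have hp := hF.shift p n (p + n)
  simp only [add_sub_cancel_left, Int.cast_add, add_sub_cancel_left] at hn hp
  rw [hF.symm 0 p] at hn
  rw [hF.symm 0 n, hF.symm p n, add_comm p n] at hp
  linear_combination (p : ℂ) * hp - (n : ℂ) * hn

theorem two_mul_apply_zero_zero_zero (hF : IsBiderivationCoeffs b F) :
    2 * F 0 0 0 = (1 - b) * (F (-1) 0 (-1) + F 1 0 1) := by
  have h := hF.leibniz 1 (-1) 0 0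
  norm_num at h
  linear_combination h

theorem eq_zero (hF : IsBiderivationCoeffs b F) (h0 : ∀ k, F 0 0 k = 0)
    (hdiag : ∀ p, F p 0 p = 0) : F = 0 := by
  have cancel : ∀ {m k : ℤ} {x : ℂ}, k ≠ m → ((k : ℂ) - m) * x = 0 → x = 0 := fun hkm h =>
    (mul_eq_zero.mp h).resolve_left (sub_ne_zero.mpr (Int.cast_injective.ne hkm))
  have hcol : ∀ n k, F n 0 k = 0 := by
    intro n k
    rcases eq_or_ne k n with rfl | hkn
    · exact hdiag k
    · exact cancel hkn (by rw [hF.shift, h0, mul_zero])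
  have hoff : ∀ m n k, k ≠ m → F m n k = 0 := fun m n k hkm =>
    cancel hkm (by rw [hF.shift, hF.symm 0, hcol, mul_zero])
  funext m n k
  rcases eq_or_ne k m with rfl | hkm
  · rcases eq_or_ne n k with rfl | hnk
    · rcases eq_or_ne n 0 with rfl | hn
      · exact h0 0
      -- the Leibniz rule at `(2n, -n)` expresses `F n n n` through off-diagonal values
      have h := hF.leibniz (2 * n) (-n) n n
      rw [show 2 * n + -n = n by ring, show n - 2 * n = -n by ring, show n - -n = 2 * n by ring,
        hF.symm (-n), hF.symm (2 * n), hoff n (-n) (-n) (by omega),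
        hoff n (2 * n) (2 * n) (by omega)] at h
      have h3n : (3 * n : ℂ) ≠ 0 := mul_ne_zero three_ne_zero (Int.cast_ne_zero.mpr hn)
      push_cast at h
      exact (mul_eq_zero.mp (by linear_combination h)).resolve_left h3n
    · rw [hF.symm]; exact hoff n k k hnk.symm
  · exact hoff m n k hkm

theorem ext (hF : IsBiderivationCoeffs b F) (hG : IsBiderivationCoeffs b G)
    (h0 : ∀ k, F 0 0 k = G 0 0 k) (hdiag : ∀ p, F p 0 p = G p 0 p) : F = G :=
  sub_eq_zero.mp <| (hF.sub hG).eq_zero (fun k => sub_eq_zero.mpr (h0 k))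
    fun p => sub_eq_zero.mpr (hdiag p)

theorem apply_diag_of_b_eq_zero (hF : IsBiderivationCoeffs 0 F) (p : ℤ) : F p 0 p = F 0 0 0 := by
  have hp := hF.diag_relation 1 p
  have hm := hF.diag_relation 1 (-1)
  have h0 := hF.two_mul_apply_zero_zero_zero
  simp only [zero_mul, add_zero, Int.cast_one, one_mul, mul_one, Int.cast_neg, sub_zero] at hp hm h0
  have h1 : F 1 0 1 = F 0 0 0 := by linear_combination -h0 / 2 + hm / 2
  rcases eq_or_ne p 0 with rfl | hp0
  · rfl
  · exact mul_left_cancel₀ (Int.cast_ne_zero.mpr hp0) (by rw [hp, h1])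

theorem apply_diag_of_b_eq_one (hF : IsBiderivationCoeffs 1 F) (p : ℤ) : F p 0 p = p * F 1 0 1 := by
  have hp := hF.diag_relation 1 p
  simp only [Int.cast_one, one_mul, mul_one] at hp
  rcases eq_or_ne p (-1) with rfl | hp1
  · have h2 := hF.diag_relation 1 2
    have hm := hF.diag_relation 2 (-1)
    norm_num at h2 hm
    linear_combination hm / 2 - h2 / 6
  · have hne : (p : ℂ) + 1 ≠ 0 := by
      rw [← Int.cast_one, ← Int.cast_add, Int.cast_ne_zero]; omega
    exact mul_left_cancel₀ hne (by linear_combination hp)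

theorem apply_zero_zero_of_b_eq_one (hF : IsBiderivationCoeffs 1 F) (t : ℤ) :
    F 0 0 t = t * F (1 - t) 0 1 := by
  have h := hF.shift (1 - t) 0 1
  simp only [sub_sub_cancel, Int.cast_sub, Int.cast_one, one_mul] at h
  linear_combination -h

theorem eq_zero_of_b_ne (hF : IsBiderivationCoeffs b F) (hb0 : b ≠ 0) (hb1 : b ≠ 1) : F = 0 := by
  have hb1' : 1 - b ≠ 0 := sub_ne_zero.mpr hb1.symm
  have hcol : ∀ p, F 0 p 0 = 0 := fun p =>
    (mul_eq_zero.mp (hF.mul_apply_zero_left_zero p)).resolve_left hb0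
  have h0 : ∀ k, F 0 0 k = 0 := by
    intro k
    rcases eq_or_ne k 0 with rfl | hk
    · exact hcol 0
    have h := hF.shift (-k) 0 0
    rw [hF.symm, hcol, sub_neg_eq_add, zero_add] at h
    push_cast at h
    refine (mul_eq_zero.mp (?_ : ((k : ℂ) * (1 - b)) * F 0 0 k = 0)).resolve_left
      (mul_ne_zero (Int.cast_ne_zero.mpr hk) hb1')
    linear_combination -h
  have h1 : F 1 0 1 = 0 := by
    have h := hF.two_mul_apply_zero_zero_zero
    have hm := hF.diag_relation 1 (-1)
    rw [h0] at h
    push_cast at hm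
    refine (mul_eq_zero.mp (?_ : (2 * (1 - b)) * F 1 0 1 = 0)).resolve_left
      (mul_ne_zero two_ne_zero hb1')
    linear_combination hm - h
  -- `(p + b) F p 0 p = 0` and, as `F p 0 p = F (-p) 0 (-p)`, also `(b - p) F p 0 p = 0`
  refine hF.eq_zero h0 fun p => ?_
  rcases eq_or_ne p 0 with rfl | hp
  · exact h0 0
  have hq : ∀ q : ℤ, (q + b) * F q 0 q = 0 := fun q => by
    linear_combination hF.diag_relation 1 q + q * (1 + b * q) * h1
  have hp' : (p : ℂ) ≠ 0 := Int.cast_ne_zero.mpr hp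
  have hsymm : F (-p) 0 (-p) = F p 0 p := by
    have h := hF.diag_relation (-p) p
    push_cast at h
    refine mul_left_cancel₀ (mul_ne_zero (mul_ne_zero hp' hp') hb1') ?_
    linear_combination h
  have hneg := hq (-p)
  rw [hsymm] at hneg
  push_cast at hneg
  have h2p : (2 * p : ℂ) * F p 0 p = 0 := by linear_combination hq p - hneg
  exact (mul_eq_zero.mp h2p).resolve_left (mul_ne_zero two_ne_zero hp')

theorem exists_of_b_eq_zero (hF : IsBiderivationCoeffs 0 F) (hfin : (F 0 0).support.Finite) :
    ∃ μ : ℤ →₀ ℂ, ∀ m n k, F m n k = μ (k - m - n) := by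
  refine ⟨Finsupp.ofSupportFinite _ hfin, fun m n k => ?_⟩
  rw [Finsupp.ofSupportFinite_coe]
  refine congrFun (congrFun (congrFun (hF.ext (isBiderivationCoeffs_zero_of_weight (F 0 0))
    (fun k => by simp) fun p => by simp [hF.apply_diag_of_b_eq_zero]) m) n) k

theorem exists_of_b_eq_one (hF : IsBiderivationCoeffs 1 F) (hfin : (F 0 0).support.Finite) :
    ∃ μ : ℤ →₀ ℂ, ∀ m n k, F m n k = k * μ (k - m - n) := by
  have hfin' : (fun t => F (1 - t) 0 1).support.Finite := by
    refine (hfin.insert 0).subset fun t ht => ?_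
    rcases eq_or_ne t 0 with rfl | ht0
    · exact Set.mem_insert 0 _
    · exact Set.mem_insert_of_mem 0 (by
        rw [Function.mem_support, hF.apply_zero_zero_of_b_eq_one]
        exact mul_ne_zero (Int.cast_ne_zero.mpr ht0) ht)
  refine ⟨Finsupp.ofSupportFinite _ hfin', fun m n k => ?_⟩
  rw [Finsupp.ofSupportFinite_coe]
  have hG := isBiderivationCoeffs_one_of_weight fun t => F (1 - t) 0 1
  refine congrFun (congrFun (congrFun (hF.ext hG (fun k => by simp [hF.apply_zero_zero_of_b_eq_one])
    fun p => by simp [hF.apply_diag_of_b_eq_one p]) m) n) k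

end IsBiderivationCoeffs

section Virasoro

variable {V : Type*} [LieRing V] [LieAlgebra ℂ V] {L : ℤ → V} {Cc : V}

theorem eq_zero_of_map_lie_eq_zero {N : Type*} [AddCommGroup N] [Module ℂ N]
    (bV : Module.Basis (ℤ ⊕ Unit) ℂ V) (hLdef : ∀ m : ℤ, L m = bV (Sum.inl m))
    (hCdef : Cc = bV (Sum.inr ()))
    (hLL : ∀ m n : ℤ, ⁅L m, L n⁆ = ((m : ℂ) - n) • L (m + n) +
      (if m + n = 0 then ((m : ℂ) ^ 3 - m) / 12 else 0) • Cc)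
    (f : V →ₗ[ℂ] N) (hf : ∀ y z : V, f ⁅y, z⁆ = 0) : f = 0 := by
  have hL0 : f (L 0) = 0 := by
    simpa [hLL] using hf (L 1) (L (-1))
  refine bV.ext ?_
  rintro (m | ⟨⟩)
  · rw [← hLdef, LinearMap.zero_apply]
    rcases eq_or_ne m 0 with rfl | hm
    · exact hL0
    · simpa [hLL, hm] using hf (L 0) (L m)
  · rw [← hCdef, LinearMap.zero_apply]
    have h := hf (L 2) (L (-2))
    norm_num [hLL, hL0] at h
    exact h

theorem isBiderivationCoeffs_repr {M : Type*} [AddCommGroup M] [Module ℂ M]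
    [LieRingModule V M] [LieModule ℂ V M] {b : ℂ}
    (hLL : ∀ m n : ℤ, ⁅L m, L n⁆ = ((m : ℂ) - n) • L (m + n) +
      (if m + n = 0 then ((m : ℂ) ^ 3 - m) / 12 else 0) • Cc)
    (bM : Module.Basis ℤ ℂ M) (hLv : ∀ m i : ℤ, ⁅L m, bM i⁆ = (-((i : ℂ) + b * m)) • bM (m + i))
    {δ : V →ₗ[ℂ] V →ₗ[ℂ] M} (hδ : δ.IsBiderivation) (hsym : ∀ x y, δ x y = δ y x)
    (hδC : δ Cc = 0) :
    IsBiderivationCoeffs b fun m n k => bM.repr (δ (L m) (L n)) k where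
  symm m n k := by rw [hsym]
  leibniz m n p k := by
    have hrepr : ∀ (m : ℤ) (w : M),
        bM.repr ⁅L m, w⁆ k = -((k : ℂ) - m + b * m) * bM.repr w (k - m) := fun m w => by
      simpa using bM.repr_map_of_shift (LieModule.toEnd ℂ V M (L m)) m _ (hLv m) w k
    have h := congrArg (fun w => bM.repr w k) (hδ.lie_left (L m) (L n) (L p))
    simp only [hLL, map_add, map_smul, hδC, LinearMap.smul_apply, smul_zero, add_zero, map_sub,
      Finsupp.sub_apply, Finsupp.smul_apply, smul_eq_mul, hrepr] at h
    linear_combination h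

end Virasoro

theorem symmetric_biderivation_Vir_density
(b : ℂ)
    (V : Type) [LieRing V] [LieAlgebra ℂ V]
    (bV : Module.Basis (ℤ ⊕ Unit) ℂ V)
    (L : ℤ → V) (Cc : V)
    (hLdef : ∀ m : ℤ, L m = bV (Sum.inl m))
    (hCdef : Cc = bV (Sum.inr ()))
    (hLL : ∀ m n : ℤ, ⁅L m, L n⁆ = ((m : ℂ) - n) • L (m + n) +
      (if m + n = 0 then ((m : ℂ) ^ 3 - m) / 12 else 0) • Cc)
    (hLC : ∀ m : ℤ, ⁅L m, Cc⁆ = 0)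
    (M : Type) [AddCommGroup M] [Module ℂ M] [LieRingModule V M] [LieModule ℂ V M]
    (bM : Module.Basis ℤ ℂ M) (v : ℤ → M) (hvdef : ∀ i : ℤ, v i = bM i)
    (hLv : ∀ m i : ℤ, ⁅L m, v i⁆ = (-((i : ℂ) + b * m)) • v (m + i))
    (hCv : ∀ i : ℤ, ⁅Cc, v i⁆ = 0)
    (δ : V →ₗ[ℂ] V →ₗ[ℂ] M)
    (hbd1 : ∀ x y z : V, δ ⁅x, y⁆ z = ⁅x, δ y z⁆ - ⁅y, δ x z⁆)
    (hbd2 : ∀ x y z : V, δ x ⁅y, z⁆ = ⁅y, δ x z⁆ - ⁅z, δ x y⁆)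
    (hsym : ∀ x y : V, δ x y = δ y x) :
    (∀ x : V, δ x Cc = 0 ∧ δ Cc x = 0) ∧
    ∃ μ : ℤ →₀ ℂ,
      (b = 0 → ∀ m n : ℤ, δ (L m) (L n) = μ.sum fun k c => c • v (m + n + k)) ∧
      (b = 1 → ∀ m n : ℤ, δ (L m) (L n) =
        μ.sum fun k c => (((m : ℂ) + n + k) * c) • v (m + n + k)) ∧
      (b ≠ 0 → b ≠ 1 → ∀ m n : ℤ, δ (L m) (L n) = 0) := by
  obtain rfl : v = bM := funext hvdef
  have hδ : δ.IsBiderivation := ⟨hbd1, hbd2⟩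
  have hCV : ∀ y : V, ⁅Cc, y⁆ = 0 := bV.lie_eq_zero_of_lie_apply_eq_zero fun
    | .inl m => by rw [← hLdef, ← lie_skew, hLC, neg_zero]
    | .inr () => by rw [← hCdef, lie_self]
  have hδC : δ Cc = 0 := eq_zero_of_map_lie_eq_zero bV hLdef hCdef hLL (δ Cc)
    (hδ.apply_lie_eq_zero_of_central hCV (bM.lie_eq_zero_of_lie_apply_eq_zero hCv))
  have hF := isBiderivationCoeffs_repr hLL bM hLv hδ hsym hδC
  have hfin := (bM.repr (δ (L 0) (L 0))).hasFiniteSupport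
  refine ⟨fun x => ⟨by rw [hsym, hδC, LinearMap.zero_apply], by rw [hδC, LinearMap.zero_apply]⟩,
    ?_⟩
  rcases eq_or_ne b 0 with rfl | hb0
  · obtain ⟨μ, hμ⟩ := hF.exists_of_b_eq_zero hfin
    refine ⟨μ, fun _ m n => bM.ext_elem fun j => ?_, fun h => absurd h zero_ne_one,
      fun h => absurd rfl h⟩
    have h := bM.repr_sum_smul_shift 1 μ (m + n) j
    simp only [Pi.one_apply, one_mul] at h
    rw [h, ← sub_sub]
    exact hμ m n j
  rcases eq_or_ne b 1 with rfl | hb1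
  · obtain ⟨μ, hμ⟩ := hF.exists_of_b_eq_one hfin
    refine ⟨μ, fun h => absurd h one_ne_zero, fun _ m n => bM.ext_elem fun j => ?_,
      fun _ h => absurd rfl h⟩
    rw [bM.repr_sum_smul_shift (fun k => (m : ℂ) + n + k)]
    simp [hμ, sub_sub]
  · refine ⟨0, fun h => absurd h hb0, fun h => absurd h hb1, fun _ _ m n => bM.ext_elem fun j => ?_⟩
    simpa using congrFun (congrFun (congrFun (hF.eq_zero_of_b_ne hb0 hb1) m) n) j
end

section
/- Every symmetric biderivation δ : Vir × Vir → Vir of the Virasoro algebra (where Vir acts on itself by the adjoint action) is trivial, i.e. δ(x, y) = 0 for all x, y ∈ Vir. -/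
/-!
Each `δ x` is a derivation, so it maps the central element `C` into the centre; hence
`δ ⁅x, y⁆ C = 0`, and since Vir is perfect, `δ x C = 0` for all `x`. Comparing the Leibniz rules
at `⁅L m, L 0⁆ = m • L m` and `⁅L n, L 0⁆ = n • L n` gives `δ (L m) (L n) = δ (L 0) (L (m + n))`
for `m ≠ n`, so everything is governed by `f n = δ (L 0) (L n)`. Reading off `L 0`-weights in the
Leibniz identities for `f` first forces `δ (L 0) (L 0) = 0`; then `f n = a n • L n` with
`n a (m + n) = (n - m) a n`, whence `a = 0`. Finally the diagonal `δ (L n) (L n)` is reached by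
writing `L n` as a multiple of a bracket of two other basis vectors.
-/

open LieAlgebra LieModule

/-- The left Leibniz rule follows from symmetry: `IsSymmBiderivation.lie_apply`. -/
structure IsSymmBiderivation {R L : Type*} [CommRing R] [LieRing L] [LieAlgebra R L]
    (δ : L →ₗ[R] L →ₗ[R] L) : Prop where
  symm : ∀ x y, δ x y = δ y x
  apply_lie : ∀ x y z, δ x ⁅y, z⁆ = ⁅y, δ x z⁆ - ⁅z, δ x y⁆

namespace IsSymmBiderivation

variable {R L : Type*} [CommRing R] [LieRing L] [LieAlgebra R L] {δ : L →ₗ[R] L →ₗ[R] L}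

theorem lie_apply (hδ : IsSymmBiderivation δ) (x y z : L) :
    δ ⁅x, y⁆ z = ⁅x, δ y z⁆ - ⁅y, δ x z⁆ := by
  rw [hδ.symm, hδ.apply_lie, hδ.symm z y, hδ.symm z x]

theorem apply_mem_center (hδ : IsSymmBiderivation δ) (x : L) {c : L} (hc : c ∈ center R L) :
    δ x c ∈ center R L := by
  rw [mem_maxTrivSubmodule] at hc ⊢
  intro y
  have h := hδ.apply_lie x y c
  rwa [hc, map_zero, ← lie_skew c (δ x y), hc, neg_zero, sub_zero, eq_comm] at h

theorem apply_lie_eq_zero_of_mem_center (hδ : IsSymmBiderivation δ) (x y : L) {c : L}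
    (hc : c ∈ center R L) : δ ⁅x, y⁆ c = 0 := by
  have hy := (mem_maxTrivSubmodule R L L _).1 (hδ.apply_mem_center y hc) x
  have hx := (mem_maxTrivSubmodule R L L _).1 (hδ.apply_mem_center x hc) y
  rw [hδ.lie_apply, hy, hx, sub_zero]

theorem apply_eq_zero_of_mem_center (hδ : IsSymmBiderivation δ)
    (hL : ⁅(⊤ : LieIdeal R L), (⊤ : LieIdeal R L)⁆ = ⊤) (x : L) {c : L} (hc : c ∈ center R L) :
    δ x c = 0 := by
  have hx : x ∈ ⁅(⊤ : LieIdeal R L), (⊤ : LieIdeal R L)⁆ := by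
    rw [hL]; exact LieSubmodule.mem_top x
  rw [← LieSubmodule.mem_toSubmodule, LieSubmodule.lieIdeal_oper_eq_linear_span'] at hx
  induction hx using Submodule.span_induction with
  | mem _ h =>
    obtain ⟨a, -, b, -, rfl⟩ := h
    exact hδ.apply_lie_eq_zero_of_mem_center a b hc
  | zero => simp
  | add _ _ _ _ hy hz => simp [hy, hz]
  | smul _ _ _ hy => simp [hy]

theorem sub_smul_apply_eq_apply_lie (hδ : IsSymmBiderivation δ) {h a b : L} {α β : R}
    (ha : ⁅a, h⁆ = α • a) (hb : ⁅b, h⁆ = β • b) : (α - β) • δ a b = δ h ⁅a, b⁆ := by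
  have h₁ := hδ.lie_apply a h b
  have h₂ := hδ.apply_lie a b h
  rw [ha, map_smul, LinearMap.smul_apply] at h₁
  rw [hb, map_smul] at h₂
  rw [hδ.apply_lie h a b, sub_smul, h₁, h₂, hδ.symm a h]
  abel

end IsSymmBiderivation

theorem eq_zero_of_mul_apply_add_eq {K : Type*} [Field K] [CharZero K] {a : ℤ → K}
    (h : ∀ m n : ℤ, m ≠ n → (n : K) * a (m + n) = (n - m) * a n) (n : ℤ) : a n = 0 := by
  have h₁₂ := h 1 2 (by norm_num)
  have h₃₂ := h (-1) 3 (by norm_num)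
  have h₂₁ := h 2 1 (by norm_num)
  norm_num at h₁₂ h₃₂ h₂₁
  have a₃ : a 3 = 0 := by linear_combination (3 * h₁₂ + h₃₂) / 2
  have a₁ : a 1 = 0 := by linear_combination h₂₁ - a₃
  obtain rfl | hn := eq_or_ne n 2
  · linear_combination 2 * a₃ - h₁₂
  · simpa only [sub_add_cancel, Int.cast_one, Int.cast_sub, a₁, mul_zero, one_mul] using
      h (n - 1) 1 (by omega)

structure VirasoroBasis (V : Type*) [LieRing V] [LieAlgebra ℂ V] where
  basis : Module.Basis (ℤ ⊕ Unit) ℂ V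
  L : ℤ → V
  C : V
  basis_inl : ∀ m, basis (.inl m) = L m
  basis_inr : basis (.inr ()) = C
  lie_L_L : ∀ m n : ℤ, ⁅L m, L n⁆ = ((m : ℂ) - n) • L (m + n) +
      (if m + n = 0 then ((m : ℂ) ^ 3 - m) / 12 else 0) • C
  lie_L_C : ∀ m : ℤ, ⁅L m, C⁆ = 0

namespace VirasoroBasis

variable {V : Type*} [LieRing V] [LieAlgebra ℂ V] (B : VirasoroBasis V)

noncomputable def coord (k : ℤ) : V →ₗ[ℂ] ℂ := B.basis.coord (.inl k)

noncomputable def coordC : V →ₗ[ℂ] ℂ := B.basis.coord (.inr ())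

@[simp] theorem coord_L (k m : ℤ) : B.coord k (B.L m) = if m = k then 1 else 0 := by
  simp [coord, ← B.basis_inl, Finsupp.single_apply]

@[simp] theorem coord_C (k : ℤ) : B.coord k B.C = 0 := by
  simp [coord, ← B.basis_inr]

@[simp] theorem coordC_L (m : ℤ) : B.coordC (B.L m) = 0 := by
  simp [coordC, ← B.basis_inl]

@[simp] theorem coordC_C : B.coordC B.C = 1 := by
  simp [coordC, ← B.basis_inr]

theorem ext_coord {v w : V} (h : ∀ k, B.coord k v = B.coord k w) (hC : B.coordC v = B.coordC w) :
    v = w := by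
  refine B.basis.ext_elem fun i => ?_
  rcases i with k | ⟨⟩
  exacts [h k, hC]

theorem lie_C (x : V) : ⁅x, B.C⁆ = 0 := by
  suffices (ad ℂ V).flip B.C = 0 from LinearMap.congr_fun this x
  refine B.basis.ext fun i => ?_
  rcases i with m | ⟨⟩
  · simp [B.basis_inl, B.lie_L_C]
  · simp [B.basis_inr]

theorem C_mem_center : B.C ∈ center ℂ V := (mem_maxTrivSubmodule ℂ V V _).2 B.lie_C

theorem lie_L_L0 (m : ℤ) : ⁅B.L m, B.L 0⁆ = (m : ℂ) • B.L m := by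
  simp only [B.lie_L_L, add_zero]
  split_ifs with h <;> simp [h]

theorem coord_lie_L (m k : ℤ) (v : V) :
    B.coord k ⁅B.L m, v⁆ = (2 * m - k) * B.coord (k - m) v := by
  suffices (B.coord k).comp (ad ℂ V (B.L m)) = ((2 * m - k : ℂ)) • B.coord (k - m) from
    LinearMap.congr_fun this v
  refine B.basis.ext fun i => ?_
  rcases i with j | ⟨⟩
  · simp only [LinearMap.comp_apply, ad_apply, LinearMap.smul_apply, B.basis_inl, B.lie_L_L,
      map_add, map_smul, coord_L, coord_C, smul_eq_mul, mul_zero, add_zero]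
    split_ifs <;> first | omega | (subst_vars; push_cast; ring)
  · simp [B.basis_inr, B.lie_L_C]

theorem coordC_lie_L (m : ℤ) (v : V) :
    B.coordC ⁅B.L m, v⁆ = ((m : ℂ) ^ 3 - m) / 12 * B.coord (-m) v := by
  suffices B.coordC.comp (ad ℂ V (B.L m)) = (((m : ℂ) ^ 3 - m) / 12) • B.coord (-m) from
    LinearMap.congr_fun this v
  refine B.basis.ext fun i => ?_
  rcases i with j | ⟨⟩
  · simp only [LinearMap.comp_apply, ad_apply, LinearMap.smul_apply, B.basis_inl, B.lie_L_L,
      map_add, map_smul, coordC_L, coordC_C, coord_L, smul_eq_mul, mul_zero, zero_add, mul_one]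
    split_ifs <;> first | omega | simp
  · simp [B.basis_inr, B.lie_L_C]

theorem lie_L1_Lneg1 : ⁅B.L 1, B.L (-1)⁆ = (2 : ℂ) • B.L 0 := by
  rw [B.lie_L_L]; norm_num

theorem lie_L2_Lneg2 : ⁅B.L 2, B.L (-2)⁆ = (4 : ℂ) • B.L 0 + (1 / 2 : ℂ) • B.C := by
  rw [B.lie_L_L]; norm_num

theorem lie_top_top_eq_top (B : VirasoroBasis V) :
    ⁅(⊤ : LieIdeal ℂ V), (⊤ : LieIdeal ℂ V)⁆ = ⊤ := by
  rw [eq_top_iff, ← LieSubmodule.toSubmodule_le_toSubmodule, LieSubmodule.top_toSubmodule,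
    ← B.basis.span_eq, Submodule.span_le]
  set D : Submodule ℂ V := (⁅(⊤ : LieIdeal ℂ V), (⊤ : LieIdeal ℂ V)⁆ : LieIdeal ℂ V).toSubmodule
  have lie_mem (x y : V) : ⁅x, y⁆ ∈ D :=
    LieSubmodule.lie_mem_lie (LieSubmodule.mem_top x) (LieSubmodule.mem_top y)
  have L_mem (m : ℤ) : B.L m ∈ D := by
    obtain rfl | hm := eq_or_ne m 0
    · have h : B.L 0 = (2 : ℂ)⁻¹ • ⁅B.L 1, B.L (-1)⁆ := by
        rw [B.lie_L1_Lneg1, smul_smul]; norm_num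
      exact h ▸ D.smul_mem _ (lie_mem _ _)
    · have h : B.L m = (m : ℂ)⁻¹ • ⁅B.L m, B.L 0⁆ := by
        rw [B.lie_L_L0, smul_smul, inv_mul_cancel₀ (by exact_mod_cast hm), one_smul]
      exact h ▸ D.smul_mem _ (lie_mem _ _)
  have C_mem : B.C ∈ D := by
    have h : B.C = (2 : ℂ) • ⁅B.L 2, B.L (-2)⁆ - (4 : ℂ) • ⁅B.L 1, B.L (-1)⁆ := by
      rw [B.lie_L2_Lneg2, B.lie_L1_Lneg1]; module
    exact h ▸ D.sub_mem (D.smul_mem _ (lie_mem _ _)) (D.smul_mem _ (lie_mem _ _))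
  rintro _ ⟨m | ⟨⟩, rfl⟩
  · exact B.basis_inl m ▸ L_mem m
  · exact B.basis_inr ▸ C_mem

theorem eq_smul_L_of_lie_L0_eq {n : ℤ} (hn : n ≠ 0) {v : V} (hv : ⁅B.L 0, v⁆ = -(n : ℂ) • v) :
    v = B.coord n v • B.L n := by
  have hn' : (n : ℂ) ≠ 0 := by exact_mod_cast hn
  refine B.ext_coord (fun k => ?_) ?_
  · have h := congrArg (B.coord k) hv
    rw [B.coord_lie_L, map_smul, smul_eq_mul, sub_zero] at h
    rw [map_smul, coord_L, smul_eq_mul]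
    split_ifs with hnk
    · rw [hnk, mul_one]
    · have : ((n : ℂ) - k) * B.coord k v = 0 := by linear_combination h
      simpa [sub_ne_zero.2 (Int.cast_injective.ne hnk)] using this
  · have h := congrArg B.coordC hv
    rw [B.coordC_lie_L, map_smul, smul_eq_mul] at h
    simp [hn'] at h
    simp [h]

theorem lie_L0_L (n : ℤ) : ⁅B.L 0, B.L n⁆ = -(n : ℂ) • B.L n := by
  rw [← lie_skew, B.lie_L_L0, neg_smul]

variable {δ : V →ₗ[ℂ] V →ₗ[ℂ] V}

theorem apply_C (hδ : IsSymmBiderivation δ) (x : V) : δ x B.C = 0 :=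
  hδ.apply_eq_zero_of_mem_center B.lie_top_top_eq_top x B.C_mem_center

theorem apply_L_L_of_ne (hδ : IsSymmBiderivation δ) {m n : ℤ} (hmn : m ≠ n) :
    δ (B.L m) (B.L n) = δ (B.L 0) (B.L (m + n)) := by
  have h := hδ.sub_smul_apply_eq_apply_lie (B.lie_L_L0 m) (B.lie_L_L0 n)
  rw [B.lie_L_L, map_add, map_smul, map_smul, B.apply_C hδ, smul_zero, add_zero] at h
  exact smul_right_injective V (sub_ne_zero.2 (Int.cast_injective.ne hmn)) h

theorem lie_L0_apply_L0_L (hδ : IsSymmBiderivation δ) (n : ℤ) :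
    ⁅B.L 0, δ (B.L 0) (B.L n)⁆ = -(n : ℂ) • δ (B.L 0) (B.L n) + ⁅B.L n, δ (B.L 0) (B.L 0)⁆ := by
  have h := hδ.apply_lie (B.L 0) (B.L 0) (B.L n)
  rw [B.lie_L0_L, map_smul] at h
  rw [h]
  abel

theorem smul_apply_L0_L_add (hδ : IsSymmBiderivation δ) {m n : ℤ} (hmn : m ≠ n) :
    (n : ℂ) • δ (B.L 0) (B.L (m + n)) =
      ⁅B.L (m + n), δ (B.L 0) (B.L 0)⁆ - ⁅B.L m, δ (B.L 0) (B.L n)⁆ := by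
  have h := hδ.lie_apply (B.L 0) (B.L m) (B.L n)
  rw [B.lie_L0_L, map_smul, LinearMap.smul_apply, B.apply_L_L_of_ne hδ hmn,
    B.lie_L0_apply_L0_L hδ] at h
  push_cast at h
  linear_combination (norm := module) h

theorem apply_L0_L0 (hδ : IsSymmBiderivation δ) : δ (B.L 0) (B.L 0) = 0 := by
  have weight (n k : ℤ) := congrArg (B.coord k) (B.lie_L0_apply_L0_L hδ n)
  simp only [B.coord_lie_L, map_add, map_smul, smul_eq_mul, sub_zero, Int.cast_zero,
    mul_zero, zero_sub] at weight
  refine B.ext_coord (fun t => ?_) ?_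
  -- the `L t`-coefficients of the weight relations for `n = 2, 3` and of
  -- `smul_apply_L0_L_add` for `(m, n) = (1, 2)` combine to `4 • coord t (δ (L 0) (L 0)) = 0`
  · have h := congrArg (B.coord (t + 3))
      (B.smul_apply_L0_L_add hδ (m := 1) (n := 2) (by norm_num))
    simp only [B.coord_lie_L, map_sub, map_smul, smul_eq_mul] at h
    have w₂ := weight 2 (t + 2)
    have w₃ := weight 3 (t + 3)
    rw [show t + 3 - 1 = t + 2 by ring] at h
    norm_num at h w₂ w₃ ⊢
    linear_combination (-t / 4 : ℂ) * h + ((t + 1) / 4 : ℂ) * w₂ - (1 / 2 : ℂ) * w₃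
  · have h := congrArg B.coordC (B.smul_apply_L0_L_add hδ (m := 1) (n := -1) (by norm_num))
    simpa [B.coordC_lie_L] using h

theorem apply_L0_L (hδ : IsSymmBiderivation δ) (n : ℤ) : δ (B.L 0) (B.L n) = 0 := by
  have ha (m n : ℤ) (hmn : m ≠ n) : (n : ℂ) * B.coord (m + n) (δ (B.L 0) (B.L (m + n))) =
      (n - m) * B.coord n (δ (B.L 0) (B.L n)) := by
    have h := congrArg (B.coord (m + n)) (B.smul_apply_L0_L_add hδ hmn)
    simp only [B.apply_L0_L0 hδ, lie_zero, zero_sub, map_neg, map_smul, B.coord_lie_L,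
      smul_eq_mul, add_sub_cancel_left] at h
    push_cast at h
    linear_combination h
  obtain rfl | hn := eq_or_ne n 0
  · exact B.apply_L0_L0 hδ
  have hweight : ⁅B.L 0, δ (B.L 0) (B.L n)⁆ = -(n : ℂ) • δ (B.L 0) (B.L n) := by
    simpa [B.apply_L0_L0 hδ] using B.lie_L0_apply_L0_L hδ n
  rw [B.eq_smul_L_of_lie_L0_eq hn hweight,
    eq_zero_of_mul_apply_add_eq (a := fun n => B.coord n (δ (B.L 0) (B.L n))) ha n, zero_smul]

theorem apply_L_L (hδ : IsSymmBiderivation δ) (m n : ℤ) : δ (B.L m) (B.L n) = 0 := by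
  have off (k : ℤ) (hk : m ≠ k) : δ (B.L m) (B.L k) = 0 :=
    (B.apply_L_L_of_ne hδ hk).trans (B.apply_L0_L hδ _)
  obtain hmn | rfl := ne_or_eq m n
  · exact off n hmn
  -- `3m + 1` and `-2m - 1` are distinct, differ from `m` and sum to `m`, for every integer `m`
  have h := hδ.apply_lie (B.L m) (B.L (3 * m + 1)) (B.L (-2 * m - 1))
  rw [B.lie_L_L, map_add, map_smul, map_smul, B.apply_C hδ, smul_zero, add_zero,
    show 3 * m + 1 + (-2 * m - 1) = m by ring, off (-2 * m - 1) (by omega),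
    off (3 * m + 1) (by omega), lie_zero, lie_zero, sub_zero] at h
  have h5 : ((3 * m + 1 : ℤ) : ℂ) - ((-2 * m - 1 : ℤ) : ℂ) ≠ 0 := by
    rw [← Int.cast_sub, Int.cast_ne_zero]; omega
  exact (smul_eq_zero.1 h).resolve_left h5

theorem symmBiderivation_eq_zero (B : VirasoroBasis V) (hδ : IsSymmBiderivation δ) : δ = 0 := by
  have apply_C' (x : V) : δ B.C x = 0 := by rw [hδ.symm]; exact B.apply_C hδ x
  refine B.basis.ext fun i => B.basis.ext fun j => ?_
  rcases i with m | ⟨⟩ <;> rcases j with n | ⟨⟩ <;>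
    simp [B.basis_inl, B.basis_inr, B.apply_L_L hδ, B.apply_C hδ, apply_C']

end VirasoroBasis

theorem symmetric_biderivation_Vir_trivial_general
    (V : Type) [LieRing V] [LieAlgebra ℂ V]
    (bV : Module.Basis (ℤ ⊕ Unit) ℂ V)
    (L : ℤ → V) (Cc : V)
    (hLdef : ∀ m : ℤ, L m = bV (Sum.inl m))
    (hCdef : Cc = bV (Sum.inr ()))
    (hLL : ∀ m n : ℤ, ⁅L m, L n⁆ = ((m : ℂ) - n) • L (m + n) +
      (if m + n = 0 then ((m : ℂ) ^ 3 - m) / 12 else 0) • Cc)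
    (hLC : ∀ m : ℤ, ⁅L m, Cc⁆ = 0)
    (δ : V →ₗ[ℂ] V →ₗ[ℂ] V)
    (hbd2 : ∀ x y z : V, δ x ⁅y, z⁆ = ⁅y, δ x z⁆ - ⁅z, δ x y⁆)
    (hsym : ∀ x y : V, δ x y = δ y x) :
    ∀ x y : V, δ x y = 0 := by
  let B : VirasoroBasis V := ⟨bV, L, Cc, fun m => (hLdef m).symm, hCdef.symm, hLL, hLC⟩
  intro x y
  rw [B.symmBiderivation_eq_zero ⟨hsym, hbd2⟩, LinearMap.zero_apply, LinearMap.zero_apply]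

theorem symmetric_biderivation_Vir_trivial
    (V : Type) [LieRing V] [LieAlgebra ℂ V]
    (bV : Module.Basis (ℤ ⊕ Unit) ℂ V)
    (L : ℤ → V) (Cc : V)
    (hLdef : ∀ m : ℤ, L m = bV (Sum.inl m))
    (hCdef : Cc = bV (Sum.inr ()))
    (hLL : ∀ m n : ℤ, ⁅L m, L n⁆ = ((m : ℂ) - n) • L (m + n) +
      (if m + n = 0 then ((m : ℂ) ^ 3 - m) / 12 else 0) • Cc)
    (hLC : ∀ m : ℤ, ⁅L m, Cc⁆ = 0)
    (δ : V →ₗ[ℂ] V →ₗ[ℂ] V)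
    (hbd1 : ∀ x y z : V, δ ⁅x, y⁆ z = ⁅x, δ y z⁆ - ⁅y, δ x z⁆)
    (hbd2 : ∀ x y z : V, δ x ⁅y, z⁆ = ⁅y, δ x z⁆ - ⁅z, δ x y⁆)
    (hsym : ∀ x y : V, δ x y = δ y x) :
    ∀ x y : V, δ x y = 0 :=
  symmetric_biderivation_Vir_trivial_general V bV L Cc hLdef hCdef hLL hLC δ hbd2 hsym
end

section
/- Let b ∈ ℂ. If b = −1, then Cent_SVir(𝔉_b) = ℂε, i.e. a linear map γ : SVir → 𝔉_b satisfies γ([x,y]) = x · γ(y) for all x, y ∈ SVir if and only if γ is a scalar multiple of ε; if b ≠ −1, then Cent_SVir(𝔉_b) = {0}. -/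
/-!
`L₀` acts diagonally on both `SVir` and `𝔉_b`, with weight `-n` on `L_n, G_n, I_n, J_n` (and `0`
on `C`). A centroid map `γ` commutes with this action, so `γ(L_n) = A_n I_n + C_n J_n`,
`γ(G_r) = P_r I_r + Q_r J_r` and `γ(C) = U I₀ + W J₀`. Comparing coefficients in
`γ([x, y]) = x · γ(y)` turns every bracket into a linear recurrence: `[L, G]` and `[G, L]` give
`2 C_m = (r + b m) P_r`, which with `[L_m, L₀]` forces `C = P = 0`; `[G_r, L₀]` and `[G, G]` make
`A` and `Q` constant up to a factor `-b`, and `[L₂, L₋₁]`, `[L_m, L₋ₘ]` (with its central term)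
then give `(1 + b) A₀ = 0` and `U = 0`. Hence `γ = A₀ ε`, and `A₀ = 0` unless `b = -1`; for
`b = -1` one checks on basis elements that `ε` is a centroid map.
-/

open Module Sum

namespace Module.Basis

variable {ι R M : Type*} [CommRing R] [NoZeroDivisors R] [AddCommGroup M] [Module R M]

theorem repr_eq_zero_of_apply_eq_smul (b : Basis ι R M) {e : ι → R} {f : M →ₗ[R] M}
    (hf : ∀ i, f (b i) = e i • b i) {c : R} {w : M} (hw : f w = c • w) {i : ι} (hi : e i ≠ c) :
    b.repr w i = 0 := by
  have hcoord : (b.coord i).comp f = e i • b.coord i := b.ext fun j => by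
    by_cases hj : j = i
    · subst hj; simp [hf]
    · simp [hf, Ne.symm hj]
  have h := LinearMap.congr_fun hcoord w
  simp only [LinearMap.comp_apply, hw, map_smul, LinearMap.smul_apply, coord_apply,
    smul_eq_mul] at h
  exact (mul_eq_zero.mp (by linear_combination h.symm : (e i - c) * b.repr w i = 0)).resolve_left
    (sub_ne_zero.mpr hi)

theorem eq_smul_add_smul_of_apply_eq_smul (b : Basis (ι ⊕ ι) R M) {e : ι → R}
    (he : Function.Injective e) {f : M →ₗ[R] M} (hl : ∀ i, f (b (inl i)) = e i • b (inl i))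
    (hr : ∀ i, f (b (inr i)) = e i • b (inr i)) {w : M} {k : ι} (hw : f w = e k • w) :
    w = b.repr w (inl k) • b (inl k) + b.repr w (inr k) • b (inr k) := by
  have hf : ∀ j, f (b j) = Sum.elim e e j • b j := by rintro (j | j) <;> simp [hl, hr]
  refine b.repr.injective (Finsupp.ext fun j => ?_)
  by_cases hj : Sum.elim e e j = e k
  · rcases j with j | j <;> obtain rfl : j = k := he hj <;> simp
  · rw [b.repr_eq_zero_of_apply_eq_smul hf hw hj]
    have hjk : j ≠ inl k ∧ j ≠ inr k := by constructor <;> rintro rfl <;> exact hj rfl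
    simp [Finsupp.single_eq_of_ne hjk.1, Finsupp.single_eq_of_ne hjk.2]

end Module.Basis

def IsCentroidMap {R V M : Type*} [CommRing R] [AddCommGroup V] [Module R V] [AddCommGroup M]
    [Module R M] (br : V →ₗ[R] V →ₗ[R] V) (ρ : V →ₗ[R] M →ₗ[R] M) (γ : V →ₗ[R] M) : Prop :=
  ∀ x y, γ (br x y) = ρ x (γ y)

theorem IsCentroidMap.of_basis {ι R V M : Type*} [CommRing R] [AddCommGroup V] [Module R V]
    [AddCommGroup M] [Module R M] (bV : Basis ι R V) {br : V →ₗ[R] V →ₗ[R] V}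
    {ρ : V →ₗ[R] M →ₗ[R] M} {γ : V →ₗ[R] M}
    (h : ∀ i j, γ (br (bV i) (bV j)) = ρ (bV i) (γ (bV j))) : IsCentroidMap br ρ γ :=
  LinearMap.congr_fun₂ (LinearMap.ext_basis bV bV (B := br.compr₂ γ) (B' := ρ.compl₂ γ) h)

section

variable {V M : Type*} [AddCommGroup V] [Module ℂ V] [AddCommGroup M] [Module ℂ M]

structure IsSVirBasis (bV : Basis ((ℤ ⊕ Unit) ⊕ ℤ) ℂ V) (br : V →ₗ[ℂ] V →ₗ[ℂ] V) (L : ℤ → V)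
    (Cc : V) (G : ℤ → V) : Prop where
  L_eq : ∀ m : ℤ, L m = bV (inl (inl m))
  C_eq : Cc = bV (inl (inr ()))
  G_eq : ∀ r : ℤ, G r = bV (inr r)
  bracket_LL : ∀ m n : ℤ, br (L m) (L n) = ((m : ℂ) - n) • L (m + n) +
      (if m + n = 0 then ((m : ℂ) ^ 3 - m) / 12 else 0) • Cc
  bracket_LG : ∀ m r : ℤ, br (L m) (G r) = ((m : ℂ) / 2 - r) • G (m + r)
  bracket_GG : ∀ r s : ℤ, br (G r) (G s) = (2 : ℂ) • L (r + s) +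
      (if r + s = 0 then ((r : ℂ) ^ 2 - 1 / 4) / 3 else 0) • Cc
  bracket_LC : ∀ m : ℤ, br (L m) Cc = 0
  bracket_GC : ∀ r : ℤ, br (G r) Cc = 0
  bracket_GL : ∀ r m : ℤ, br (G r) (L m) = (-((m : ℂ) / 2 - r)) • G (m + r)
  bracket_C : ∀ x : V, br Cc x = 0

structure IsDensityModule (b : ℂ) (bM : Basis (ℤ ⊕ ℤ) ℂ M) (ρ : V →ₗ[ℂ] M →ₗ[ℂ] M) (L : ℤ → V)
    (Cc : V) (G : ℤ → V) (Iv Jv : ℤ → M) : Prop where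
  I_eq : ∀ n : ℤ, Iv n = bM (inl n)
  J_eq : ∀ r : ℤ, Jv r = bM (inr r)
  L_I : ∀ m n : ℤ, ρ (L m) (Iv n) = (-((n : ℂ) + b * m)) • Iv (m + n)
  L_J : ∀ m r : ℤ, ρ (L m) (Jv r) = (-((r : ℂ) + (b + 1 / 2) * m)) • Jv (m + r)
  G_I : ∀ r m : ℤ, ρ (G r) (Iv m) = (-((m : ℂ) / 2 + b * r)) • Jv (m + r)
  G_J : ∀ r s : ℤ, ρ (G r) (Jv s) = (2 : ℂ) • Iv (r + s)
  C_act : ∀ u : M, ρ Cc u = 0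

variable {bV : Basis ((ℤ ⊕ Unit) ⊕ ℤ) ℂ V} {br : V →ₗ[ℂ] V →ₗ[ℂ] V} {L G : ℤ → V} {Cc : V}
  {b : ℂ} {bM : Basis (ℤ ⊕ ℤ) ℂ M} {ρ : V →ₗ[ℂ] M →ₗ[ℂ] M} {Iv Jv : ℤ → M} {γ ε : V →ₗ[ℂ] M}

theorem IsDensityModule.smul_add_smul_inj (hM : IsDensityModule b bM ρ L Cc G Iv Jv) {k : ℤ}
    {a c a' c' : ℂ} (h : a • Iv k + c • Jv k = a' • Iv k + c' • Jv k) : a = a' ∧ c = c' := by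
  rw [hM.I_eq, hM.J_eq] at h
  exact ⟨by simpa using congr(bM.repr $h (inl k)), by simpa using congr(bM.repr $h (inr k))⟩

theorem IsDensityModule.exists_eq_of_weight (hM : IsDensityModule b bM ρ L Cc G Iv Jv) {w : M}
    {k : ℤ} (hw : ρ (L 0) w = (-k : ℂ) • w) : ∃ a c : ℂ, w = a • Iv k + c • Jv k := by
  have h := bM.eq_smul_add_smul_of_apply_eq_smul (e := fun n : ℤ => -(n : ℂ))
    (neg_injective.comp Int.cast_injective) (fun n => by simpa [← hM.I_eq] using hM.L_I 0 n)
    (fun n => by simpa [← hM.J_eq] using hM.L_J 0 n) hw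
  rw [← hM.I_eq, ← hM.J_eq] at h
  exact ⟨_, _, h⟩

namespace IsCentroidMap

theorem coeff_relation_LG (hV : IsSVirBasis bV br L Cc G)
    (hM : IsDensityModule b bM ρ L Cc G Iv Jv) (hγ : IsCentroidMap br ρ γ) {P Q : ℤ → ℂ}
    (hG : ∀ r, γ (G r) = P r • Iv r + Q r • Jv r) (m r : ℤ) :
    ((m : ℂ) / 2 - r) * P (m + r) = P r * -(r + b * m) := by
  have e := hγ (L m) (G r)
  simp only [hV.bracket_LG, hG, hM.L_I, hM.L_J, map_add, map_smul, smul_add, smul_smul] at e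
  exact (hM.smul_add_smul_inj e).1

theorem odd_coeffs_eq_zero (hV : IsSVirBasis bV br L Cc G)
    (hM : IsDensityModule b bM ρ L Cc G Iv Jv) (hγ : IsCentroidMap br ρ γ) {A Cs P Q : ℤ → ℂ}
    (hL : ∀ n, γ (L n) = A n • Iv n + Cs n • Jv n) (hG : ∀ r, γ (G r) = P r • Iv r + Q r • Jv r) :
    Cs = 0 ∧ P = 0 := by
  have hLG := hγ.coeff_relation_LG hV hM hG
  have hGL : ∀ r m : ℤ, -((m : ℂ) / 2 - r) * P (m + r) = Cs m * 2 := by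
    intro r m
    have e := hγ (G r) (L m)
    simp only [hV.bracket_GL, hL, hG, hM.G_I, hM.G_J, map_add, map_smul, smul_add, smul_smul,
      add_comm r m] at e
    exact (hM.smul_add_smul_inj (e.trans (add_comm _ _))).1
  have hLL : ∀ m : ℤ, m ≠ 0 → (m : ℂ) * Cs m = Cs 0 * -((b + 1 / 2) * m) := by
    intro m hm
    have e := hγ (L m) (L 0)
    simp only [hV.bracket_LL, add_zero, if_neg hm, zero_smul, hL, hM.L_I, hM.L_J, map_add,
      map_smul, smul_add, smul_smul, Int.cast_zero, sub_zero, zero_add] at e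
    exact (hM.smul_add_smul_inj e).2
  have hCP : ∀ m r : ℤ, 2 * Cs m = (r + b * m) * P r := fun m r => by
    linear_combination -(hGL r m) - hLG m r
  have hbP : ∀ r : ℤ, b * P r = 0 := fun r => by
    have h1 := hCP 1 r
    have h2 := hCP 2 r
    have h3 := hLL 1 one_ne_zero
    have h4 := hLL 2 two_ne_zero
    push_cast at h1 h2 h3 h4
    linear_combination h1 - h2 + h4 - 2 * h3
  have hCs : ∀ m : ℤ, Cs m = 0 := fun m => by
    linear_combination (hCP m 0 + m * hbP 0) / 2
  have hP : ∀ r : ℤ, r ≠ 0 → P r = 0 := fun r hr => by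
    have h := hCP 0 r
    rw [hCs] at h
    simpa [hr] using h.symm
  refine ⟨funext hCs, funext fun r => ?_⟩
  rcases eq_or_ne r 0 with rfl | hr
  · have h := hLG 2 (-2)
    rw [hP (-2) (by norm_num)] at h
    norm_num at h
    exact h
  · exact hP r hr

theorem even_coeffs_eq_neg_mul (hV : IsSVirBasis bV br L Cc G)
    (hM : IsDensityModule b bM ρ L Cc G Iv Jv) (hγ : IsCentroidMap br ρ γ) {A Cs P Q : ℤ → ℂ}
    (hL : ∀ n, γ (L n) = A n • Iv n + Cs n • Jv n) (hG : ∀ r, γ (G r) = P r • Iv r + Q r • Jv r) :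
    (∀ n : ℤ, n ≠ 0 → A n = -b * A 0) ∧ ∀ r, Q r = -b * A 0 := by
  have hGL : ∀ r : ℤ, (r : ℂ) * Q r = A 0 * -(b * r) := by
    intro r
    have e := hγ (G r) (L 0)
    simp only [hV.bracket_GL, hL, hG, hM.G_I, hM.G_J, map_add, map_smul, smul_add, smul_smul,
      zero_add, add_zero, Int.cast_zero, zero_div, zero_sub, neg_neg] at e
    exact (hM.smul_add_smul_inj (e.trans (add_comm _ _))).2
  have hGG : ∀ r s : ℤ, r + s ≠ 0 → A (r + s) = Q s := by
    intro r s h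
    have e := hγ (G r) (G s)
    simp only [hV.bracket_GG, if_neg h, zero_smul, add_zero, hL, hG, hM.G_I, hM.G_J, map_add,
      map_smul, smul_add, smul_smul, add_comm s r] at e
    linear_combination (hM.smul_add_smul_inj (e.trans (add_comm _ _))).1 / 2
  have hQ : ∀ r : ℤ, r ≠ 0 → Q r = -b * A 0 := fun r hr =>
    mul_left_cancel₀ (Int.cast_ne_zero.mpr hr) (by linear_combination hGL r)
  have hQ0 : Q 0 = -b * A 0 := by
    have h1 := hGG 1 0 one_ne_zero
    have h2 := hGG (-1) 2 (by norm_num)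
    norm_num at h1 h2
    linear_combination h2 - h1 + hQ 2 two_ne_zero
  have hQ' : ∀ r, Q r = -b * A 0 := fun r => by
    rcases eq_or_ne r 0 with rfl | hr
    exacts [hQ0, hQ r hr]
  exact ⟨fun n hn => by simpa [hQ'] using hGG n 0 (by simpa using hn), hQ'⟩

theorem even_coeffs_eq_const (hV : IsSVirBasis bV br L Cc G)
    (hM : IsDensityModule b bM ρ L Cc G Iv Jv) (hγ : IsCentroidMap br ρ γ) {A Cs P Q : ℤ → ℂ}
    {U W : ℂ} (hL : ∀ n, γ (L n) = A n • Iv n + Cs n • Jv n)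
    (hG : ∀ r, γ (G r) = P r • Iv r + Q r • Jv r) (hC : γ Cc = U • Iv 0 + W • Jv 0) :
    (∀ n, A n = A 0) ∧ (∀ r, Q r = A 0) ∧ U = 0 ∧ W = 0 ∧ (1 + b) * A 0 = 0 := by
  obtain ⟨hA, hQ⟩ := hγ.even_coeffs_eq_neg_mul hV hM hL hG
  have hLL : ∀ m n : ℤ, m + n ≠ 0 → ((m : ℂ) - n) * A (m + n) = A n * -(n + b * m) := by
    intro m n h
    have e := hγ (L m) (L n)
    simp only [hV.bracket_LL, if_neg h, zero_smul, add_zero, hL, hM.L_I, hM.L_J, map_add,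
      map_smul, smul_add, smul_smul] at e
    exact (hM.smul_add_smul_inj e).1
  have hLLc : ∀ m : ℤ, ((m : ℂ) - -m) * A 0 + ((m : ℂ) ^ 3 - m) / 12 * U =
      A (-m) * -(-m + b * m) := by
    intro m
    have e := hγ (L m) (L (-m))
    simp only [hV.bracket_LL, add_neg_cancel, if_true, hL, hC, hM.L_I, hM.L_J, map_add,
      map_smul, smul_add, smul_smul, Int.cast_neg] at e
    rw [add_add_add_comm, ← add_smul, ← add_smul] at e
    exact (hM.smul_add_smul_inj e).1
  have hGC : W = 0 := by
    have e := hγ (G 1) Cc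
    simp only [hV.bracket_GC, map_zero, hC, map_add, map_smul, hM.G_I, hM.G_J, smul_smul,
      add_zero, zero_add, Int.cast_zero, Int.cast_one, zero_div, mul_one] at e
    have h := hM.smul_add_smul_inj (a := W * 2) (c := U * -b) (a' := 0) (c' := 0)
      (by rw [zero_smul, zero_smul, add_zero, add_comm]; exact e.symm)
    linear_combination h.1 / 2
  have hb : (1 + b) * A 0 = 0 := by
    have h1 := hLL 2 (-1) (by norm_num)
    have h2 := hLLc 1
    norm_num [hA 1 one_ne_zero, hA (-1) (by norm_num)] at h1 h2
    linear_combination h2 / 2 + h1 / 4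
  have hA' : ∀ n, A n = A 0 := fun n => by
    rcases eq_or_ne n 0 with rfl | hn
    exacts [rfl, by linear_combination hA n hn - hb]
  refine ⟨hA', fun r => by linear_combination hQ r - hb, ?_, hGC, hb⟩
  have h := hLLc 2
  rw [hA' (-2)] at h
  push_cast at h
  linear_combination 2 * h - 4 * hb

theorem exists_eq_smul (hV : IsSVirBasis bV br L Cc G) (hM : IsDensityModule b bM ρ L Cc G Iv Jv)
    (hεL : ∀ m, ε (L m) = Iv m) (hεG : ∀ r, ε (G r) = Jv r) (hεC : ε Cc = 0)
    (hγ : IsCentroidMap br ρ γ) : ∃ c : ℂ, (1 + b) * c = 0 ∧ γ = c • ε := by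
  have weight : ∀ x (k : ℤ), br (L 0) x = (-k : ℂ) • x → ∃ a c : ℂ, γ x = a • Iv k + c • Jv k :=
    fun x k hx => hM.exists_eq_of_weight (by rw [← hγ, hx, map_smul])
  choose A Cs hL using fun n => weight (L n) n (by simp [hV.bracket_LL])
  choose P Q hG using fun r => weight (G r) r (by simp [hV.bracket_LG])
  obtain ⟨U, W, hC⟩ := weight Cc 0 (by simp [hV.bracket_LC])
  obtain ⟨rfl, rfl⟩ := hγ.odd_coeffs_eq_zero hV hM hL hG
  obtain ⟨hA, hQ, rfl, rfl, hb⟩ := hγ.even_coeffs_eq_const hV hM hL hG hC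
  refine ⟨A 0, hb, bV.ext ?_⟩
  rintro ((m | ⟨⟩) | r)
  · simp [← hV.L_eq, hL, hεL, hA]
  · simp [← hV.C_eq, hC, hεC]
  · simp [← hV.G_eq, hG, hεG, hQ]

end IsCentroidMap

theorem IsDensityModule.isCentroidMap_epsilon (hV : IsSVirBasis bV br L Cc G)
    (hM : IsDensityModule (-1) bM ρ L Cc G Iv Jv)
    (hεL : ∀ m, ε (L m) = Iv m) (hεG : ∀ r, ε (G r) = Jv r) (hεC : ε Cc = 0) :
    IsCentroidMap br ρ ε := by
  refine IsCentroidMap.of_basis bV ?_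
  rintro ((m | ⟨⟩) | r) ((n | ⟨⟩) | s) <;>
    simp only [← hV.L_eq, ← hV.C_eq, ← hV.G_eq, hV.bracket_LL, hV.bracket_LG, hV.bracket_GG,
      hV.bracket_LC, hV.bracket_GC, hV.bracket_GL, hV.bracket_C, hM.L_I, hM.L_J, hM.G_I, hM.G_J,
      hM.C_act, hεL, hεG, hεC, map_add, map_smul, map_zero, smul_zero, add_zero]
  all_goals module

theorem IsDensityModule.isCentroidMap_iff (hV : IsSVirBasis bV br L Cc G)
    (hM : IsDensityModule b bM ρ L Cc G Iv Jv)
    (hεL : ∀ m, ε (L m) = Iv m) (hεG : ∀ r, ε (G r) = Jv r) (hεC : ε Cc = 0) :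
    IsCentroidMap br ρ γ ↔ ∃ c : ℂ, (1 + b) * c = 0 ∧ γ = c • ε := by
  refine ⟨IsCentroidMap.exists_eq_smul hV hM hεL hεG hεC, ?_⟩
  rintro ⟨c, hc, rfl⟩ x y
  obtain rfl | rfl : b = -1 ∨ c = 0 := (mul_eq_zero.mp hc).imp eq_neg_of_add_eq_zero_right id
  · simp [hM.isCentroidMap_epsilon hV hεL hεG hεC x y]
  · simp

end

theorem centroid_SVir_density
(b : ℂ)
    (V : Type) [AddCommGroup V] [Module ℂ V]
    (bV : Module.Basis ((ℤ ⊕ Unit) ⊕ ℤ) ℂ V)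
    (br : V →ₗ[ℂ] V →ₗ[ℂ] V)
    (L : ℤ → V) (Cc : V) (G : ℤ → V)
    (hLdef : ∀ m : ℤ, L m = bV (Sum.inl (Sum.inl m)))
    (hCdef : Cc = bV (Sum.inl (Sum.inr ())))
    (hGdef : ∀ r : ℤ, G r = bV (Sum.inr r))
    (hLL : ∀ m n : ℤ, br (L m) (L n) = ((m : ℂ) - n) • L (m + n) +
      (if m + n = 0 then ((m : ℂ) ^ 3 - m) / 12 else 0) • Cc)
    (hLG : ∀ m r : ℤ, br (L m) (G r) = ((m : ℂ) / 2 - r) • G (m + r))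
    (hGG : ∀ r s : ℤ, br (G r) (G s) = (2 : ℂ) • L (r + s) +
      (if r + s = 0 then ((r : ℂ) ^ 2 - 1 / 4) / 3 else 0) • Cc)
    (hLC : ∀ m : ℤ, br (L m) Cc = 0)
    (hGC : ∀ r : ℤ, br (G r) Cc = 0)
    (hGL : ∀ r m : ℤ, br (G r) (L m) = (-((m : ℂ) / 2 - r)) • G (m + r))
    (hCx : ∀ x : V, br Cc x = 0)
    (M : Type) [AddCommGroup M] [Module ℂ M]
    (bM : Module.Basis (ℤ ⊕ ℤ) ℂ M)
    (Iv : ℤ → M) (Jv : ℤ → M)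
    (hIdef : ∀ n : ℤ, Iv n = bM (Sum.inl n))
    (hJdef : ∀ r : ℤ, Jv r = bM (Sum.inr r))
    (ρ : V →ₗ[ℂ] M →ₗ[ℂ] M)
    (hLI : ∀ m n : ℤ, ρ (L m) (Iv n) = (-((n : ℂ) + b * m)) • Iv (m + n))
    (hLJ : ∀ m r : ℤ, ρ (L m) (Jv r) = (-((r : ℂ) + (b + 1 / 2) * m)) • Jv (m + r))
    (hGI : ∀ r m : ℤ, ρ (G r) (Iv m) = (-((m : ℂ) / 2 + b * r)) • Jv (m + r))
    (hGJ : ∀ r s : ℤ, ρ (G r) (Jv s) = (2 : ℂ) • Iv (r + s))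
    (hCM : ∀ u : M, ρ Cc u = 0)
    (ε : V →ₗ[ℂ] M) (hεL : ∀ m : ℤ, ε (L m) = Iv m) (hεG : ∀ r : ℤ, ε (G r) = Jv r)
    (hεC : ε Cc = 0)
    (γ : V →ₗ[ℂ] M) :
    (b = -1 → ((∀ x y : V, γ (br x y) = ρ x (γ y)) ↔ ∃ lam : ℂ, ∀ x : V, γ x = lam • ε x)) ∧
    (b ≠ -1 → ((∀ x y : V, γ (br x y) = ρ x (γ y)) ↔ γ = 0)) := by
  have key : IsCentroidMap br ρ γ ↔ ∃ c : ℂ, (1 + b) * c = 0 ∧ γ = c • ε :=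
    IsDensityModule.isCentroidMap_iff
      ⟨hLdef, hCdef, hGdef, hLL, hLG, hGG, hLC, hGC, hGL, hCx⟩
      ⟨hIdef, hJdef, hLI, hLJ, hGI, hGJ, hCM⟩ hεL hεG hεC
  refine ⟨fun hb => key.trans ⟨fun ⟨c, _, hγ⟩ => ⟨c, fun x => by rw [hγ]; rfl⟩,
    fun ⟨c, hγ⟩ => ⟨c, by rw [hb]; ring, LinearMap.ext hγ⟩⟩, fun hb => key.trans ⟨?_, ?_⟩⟩
  · rintro ⟨c, hc, rfl⟩
    rw [(mul_eq_zero.mp hc).resolve_left fun h => hb (eq_neg_of_add_eq_zero_right h), zero_smul]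
  · rintro rfl
    exact ⟨0, mul_zero _, (zero_smul ℂ ε).symm⟩
end

section
/- Every symmetric super-biderivation φ of the N=1 super-BMS₃ algebra ℬ (homogeneous of either ℤ/2-degree, with ℬ acting on itself by the adjoint action) is trivial, i.e. φ(x, y) = 0 for all x, y ∈ ℬ. -/
/-!
Put `ψ x = φ(x, L₀) = φ(L₀, x)`, a superderivation. As `ad L₀` acts on the basis vector of
index `i` by the scalar `wt i`, the derivation rule for `φ(x, [L₀, z])` reads
`(wt z - ad L₀) φ(x, z) = ± [z, ψ x]`, and the proof reads this identity in coordinates.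
At coordinates of weight `wt z` its left side vanishes: this kills the `L₀`- and
`W₀`-coordinates of every `ψ x`, then every non-central coordinate of `N = φ(L₀, L₀)`, so that
`N` is central and `ψ` preserves weights. Comparing the identities for `(L_m, L_n)` and
`(L_n, L_m)` gives `(n - m)(n a_m + m a_n) = 0` for the diagonal coefficients `a_m` of
`ψ(L_m)`, so they vanish, while `[Q_k, ψ(Q_k)] = 0` (as `φ(Q_k, Q_k) = 0`) kills `ψ(Q_k)`.
Hence `ψ` vanishes on the generators `L_a` (`a ≠ 0`) and `Q_k`, so on their brackets, which
span everything. Now `φ(x, z)` is an eigenvector of `ad L₀` for both `wt x` and `wt z`, so it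
vanishes unless the weights agree, and then `z` is a combination of brackets of generators of
weights other than `wt x`, on which `φ(x, ·)` vanishes by the derivation rule.
-/

namespace SuperBMS3

abbrev Idx : Type := ((ℤ ⊕ ℤ) ⊕ (Unit ⊕ Unit)) ⊕ ℤ

namespace Idx

abbrev L (n : ℤ) : Idx := Sum.inl (Sum.inl (Sum.inl n))
abbrev W (n : ℤ) : Idx := Sum.inl (Sum.inl (Sum.inr n))
abbrev C1 : Idx := Sum.inl (Sum.inr (Sum.inl ()))
abbrev C2 : Idx := Sum.inl (Sum.inr (Sum.inr ()))
/-- The index of the odd generator `Q_{k + 1/2}`. -/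
abbrev Q (k : ℤ) : Idx := Sum.inr k

theorem induction {motive : Idx → Prop} (L : ∀ n, motive (L n)) (W : ∀ n, motive (W n))
    (C1 : motive C1) (C2 : motive C2) (Q : ∀ k, motive (Q k)) (i : Idx) : motive i := by
  rcases i with ((n | n) | (⟨⟩ | ⟨⟩)) | k
  exacts [L n, W n, C1, C2, Q k]

def parity : Idx → ZMod 2
  | Sum.inl _ => 0
  | Sum.inr _ => 1

/-- Twice the degree, so that it is an integer also on the odd generators. -/
def deg2 : Idx → ℤ
  | Sum.inl (Sum.inl (Sum.inl n)) => 2 * n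
  | Sum.inl (Sum.inl (Sum.inr n)) => 2 * n
  | Sum.inl (Sum.inr _) => 0
  | Sum.inr k => 2 * k + 1

/-- The eigenvalue of `ad L₀` on the basis vector of index `i`. -/
noncomputable def wt (i : Idx) : ℂ := -(i.deg2 : ℂ) / 2

@[simp] lemma parity_L (n : ℤ) : (L n).parity = 0 := rfl

@[simp] lemma deg2_L (n : ℤ) : (L n).deg2 = 2 * n := rfl
@[simp] lemma deg2_W (n : ℤ) : (W n).deg2 = 2 * n := rfl
@[simp] lemma deg2_C1 : C1.deg2 = 0 := rfl
@[simp] lemma deg2_C2 : C2.deg2 = 0 := rfl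
@[simp] lemma deg2_Q (k : ℤ) : (Q k).deg2 = 2 * k + 1 := rfl

lemma wt_eq_wt_iff {i j : Idx} : wt i = wt j ↔ i.deg2 = j.deg2 := by
  rw [wt, wt, div_left_inj' two_ne_zero, neg_inj, Int.cast_inj]

lemma wt_LW {e : ℤ → Idx} (he : e = L ∨ e = W) (s : ℤ) : wt (e s) = -s := by
  rcases he with rfl | rfl <;> simp only [wt, deg2_L, deg2_W] <;> push_cast <;> ring

def gens : Set Idx := L '' {a | a ≠ 0} ∪ Set.range Q

lemma L_mem_gens {a : ℤ} (ha : a ≠ 0) : L a ∈ gens := Or.inl ⟨a, ha, rfl⟩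

lemma Q_mem_gens (k : ℤ) : Q k ∈ gens := Or.inr ⟨k, rfl⟩

end Idx

def parSign (p : ZMod 2) : ℂ := if p = 1 then -1 else 1

@[simp] lemma parSign_zero : parSign 0 = 1 := rfl
@[simp] lemma parSign_one : parSign 1 = -1 := rfl

lemma parSign_ne_zero (p : ZMod 2) : parSign p ≠ 0 := by
  unfold parSign
  split_ifs <;> norm_num

end SuperBMS3

open SuperBMS3 SuperBMS3.Idx in
structure SuperBMS3 (V : Type) [AddCommGroup V] [Module ℂ V] where
  basis : Module.Basis Idx ℂ V
  br : V →ₗ[ℂ] V →ₗ[ℂ] V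
  grading : ZMod 2 → Submodule ℂ V
  grading_zero : grading 0 =
    Submodule.span ℂ (Set.range fun i : (ℤ ⊕ ℤ) ⊕ (Unit ⊕ Unit) => basis (Sum.inl i))
  grading_one : grading 1 = Submodule.span ℂ (Set.range fun k : ℤ => basis (Sum.inr k))
  br_L_L : ∀ m n : ℤ, br (basis (L m)) (basis (L n)) = ((m : ℂ) - n) • basis (L (m + n)) +
    (if m + n = 0 then ((m : ℂ) ^ 3 - m) / 12 else 0) • basis C1
  br_L_W : ∀ m n : ℤ, br (basis (L m)) (basis (W n)) = ((m : ℂ) - n) • basis (W (m + n)) +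
    (if m + n = 0 then ((m : ℂ) ^ 3 - m) / 12 else 0) • basis C2
  br_Q_Q : ∀ k l : ℤ, br (basis (Q k)) (basis (Q l)) = (2 : ℂ) • basis (W (k + l + 1)) +
    (if k + l + 1 = 0 then (((k : ℂ) + 1 / 2) ^ 2 - 1 / 4) / 3 else 0) • basis C2
  br_L_Q : ∀ m k : ℤ, br (basis (L m)) (basis (Q k)) =
    ((m : ℂ) / 2 - ((k : ℂ) + 1 / 2)) • basis (Q (m + k))
  br_W_Q : ∀ m k : ℤ, br (basis (W m)) (basis (Q k)) = 0
  br_C1 : ∀ x : V, br (basis C1) x = 0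
  br_C2 : ∀ x : V, br (basis C2) x = 0
  br_skew : ∀ p q : ZMod 2, ∀ x ∈ grading p, ∀ y ∈ grading q,
    br x y = (-(parSign (p * q))) • br y x

lemma Module.Basis.repr_map_apply_eq_mul {R M ι : Type*} [CommSemiring R] [AddCommMonoid M]
    [Module R M] (b : Module.Basis ι R M) (T : M →ₗ[R] M) (l l' : ι) (c : R)
    (h : ∀ j, b.repr (T (b j)) l = c * b.repr (b j) l') (v : M) :
    b.repr (T v) l = c * b.repr v l' := by
  have hT : (b.coord l).comp T = c • b.coord l' := b.ext fun j => by simpa using h j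
  simpa using LinearMap.congr_fun hT v

lemma eq_zero_of_forall_sub_mul_add_mul {K : Type*} [Field K] [CharZero K] {f : ℤ → K}
    (h : ∀ m n : ℤ, ((n : K) - m) * (n * f m + m * f n) = 0) (m : ℤ) : f m = 0 := by
  have h1 : f 1 = 0 := by
    have h12 := h 1 2
    have h13 := h 1 3
    have h23 := h 2 3
    push_cast at h12 h13 h23
    have h : (12 : K) * f 1 = 0 := by linear_combination 3 * h12 + h13 - h23
    simpa using h
  rcases eq_or_ne m 1 with rfl | hm
  · exact h1
  have hm' : (1 : K) - m ≠ 0 := sub_ne_zero.mpr (by exact_mod_cast hm.symm)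
  simpa [h1, hm'] using h m 1

namespace SuperBMS3

open Idx

variable {V : Type} [AddCommGroup V] [Module ℂ V] (A : SuperBMS3 V)

lemma basis_mem_grading (i : Idx) : A.basis i ∈ A.grading i.parity := by
  rcases i with i | k
  · rw [parity, A.grading_zero]
    exact Submodule.subset_span ⟨i, rfl⟩
  · rw [parity, A.grading_one]
    exact Submodule.subset_span ⟨k, rfl⟩

lemma br_basis_swap (i j : Idx) : A.br (A.basis i) (A.basis j) =
    (-parSign (i.parity * j.parity)) • A.br (A.basis j) (A.basis i) :=
  A.br_skew _ _ _ (A.basis_mem_grading i) _ (A.basis_mem_grading j)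

@[simp] lemma br_basis_C1 (j : Idx) : A.br (A.basis j) (A.basis C1) = 0 := by
  rw [br_basis_swap, A.br_C1, smul_zero]

@[simp] lemma br_basis_C2 (j : Idx) : A.br (A.basis j) (A.basis C2) = 0 := by
  rw [br_basis_swap, A.br_C2, smul_zero]

lemma br_L_zero (j : Idx) : A.br (A.basis (L 0)) (A.basis j) = wt j • A.basis j := by
  induction j using Idx.induction with
  | L n => rw [A.br_L_L]; simp [wt]; module
  | W n => rw [A.br_L_W]; simp [wt]; module
  | C1 | C2 => simp [wt]
  | Q k => rw [A.br_L_Q]; simp [wt]; ring_nf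

lemma repr_br_L_zero (v : V) (l : Idx) :
    A.basis.repr (A.br (A.basis (L 0)) v) l = wt l * A.basis.repr v l := by
  refine A.basis.repr_map_apply_eq_mul _ l l _ (fun j => ?_) v
  rw [br_L_zero, map_smul, Finsupp.smul_apply, smul_eq_mul, A.basis.repr_self,
    Finsupp.single_apply]
  split_ifs with h <;> simp [h]

lemma repr_br_L_LW {e : ℤ → Idx} (he : e = L ∨ e = W) (m s : ℤ) (v : V) :
    A.basis.repr (A.br (A.basis (L m)) v) (e s) =
      ((2 * m - s : ℤ) : ℂ) * A.basis.repr v (e (s - m)) := by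
  refine A.basis.repr_map_apply_eq_mul _ _ _ _ (fun j => ?_) v
  induction j using Idx.induction with
  | L n | W n =>
    first | rw [A.br_L_L] | rw [A.br_L_W]
    simp only [map_add, map_smul, Finsupp.add_apply, Finsupp.smul_apply, smul_eq_mul,
      Module.Basis.repr_self, Finsupp.single_apply]
    rcases eq_or_ne n (s - m) with rfl | h
    · have hc : (m : ℂ) - ((s : ℂ) - m) = 2 * m - s := by ring
      rcases he with rfl | rfl <;> simp [show m + (s - m) = s by ring, hc]
    · rcases he with rfl | rfl <;> simp [h, show m + n ≠ s by omega]
  | C1 | C2 => rcases he with rfl | rfl <;> simp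
  | Q k => rw [A.br_L_Q]; rcases he with rfl | rfl <;> simp

lemma repr_br_Q_W (k s : ℤ) (v : V) :
    A.basis.repr (A.br (A.basis (Q k)) v) (W s) = 2 * A.basis.repr v (Q (s - k - 1)) := by
  refine A.basis.repr_map_apply_eq_mul _ _ _ _ (fun j => ?_) v
  induction j using Idx.induction with
  | L n => rw [br_basis_swap, A.br_L_Q]; simp
  | W n => rw [br_basis_swap, A.br_W_Q]; simp
  | C1 | C2 => simp
  | Q l =>
    rw [A.br_Q_Q]
    simp only [map_add, map_smul, Finsupp.add_apply, Finsupp.smul_apply, smul_eq_mul,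
      Module.Basis.repr_self, Finsupp.single_apply]
    rcases eq_or_ne l (s - k - 1) with rfl | h
    · simp [show k + (s - k - 1) + 1 = s by ring]
    · simp [h, show k + l + 1 ≠ s by omega]

lemma br_basis_eq_zero_of_repr {v : V} (hL : ∀ r, A.basis.repr v (L r) = 0)
    (hW : ∀ r, A.basis.repr v (W r) = 0) (hQ : ∀ k, A.basis.repr v (Q k) = 0) (j : Idx) :
    A.br (A.basis j) v = 0 := by
  have hv : v = A.basis.repr v C1 • A.basis C1 + A.basis.repr v C2 • A.basis C2 := by
    refine A.basis.ext_elem fun l => ?_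
    induction l using Idx.induction <;> simp [hL, hW, hQ]
  rw [hv]
  simp

def bracketsAvoiding (μ : ℂ) : Set V :=
  {v | ∃ u ∈ gens, ∃ w ∈ gens, wt u ≠ μ ∧ wt w ≠ μ ∧ A.br (A.basis u) (A.basis w) = v}

lemma br_mem_span_bracketsAvoiding {u w : Idx} (hu : u ∈ gens) (hw : w ∈ gens) {μ : ℂ}
    (hu' : wt u ≠ μ) (hw' : wt w ≠ μ) :
    A.br (A.basis u) (A.basis w) ∈ Submodule.span ℂ (A.bracketsAvoiding μ) :=
  Submodule.subset_span ⟨u, hu, w, hw, hu', hw', rfl⟩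

lemma basis_L_mem_span_bracketsAvoiding (n : ℤ) :
    A.basis (L n) ∈ Submodule.span ℂ (A.bracketsAvoiding (wt (L n))) := by
  rcases le_or_gt 0 n with hn | hn
  · have h := A.br_mem_span_bracketsAvoiding (μ := wt (L n)) (L_mem_gens (a := n + 1) (by omega))
      (L_mem_gens (a := -1) (by omega)) (by simp [wt_eq_wt_iff]) (by simp [wt_eq_wt_iff]; omega)
    have e : A.br (A.basis (L (n + 1))) (A.basis (L (-1))) = ((n : ℂ) + 2) • A.basis (L n) := by
      rw [A.br_L_L, add_neg_cancel_right]
      split_ifs with h0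
      · subst h0; simp; norm_num
      · simp; module
    rwa [e, Submodule.smul_mem_iff _ (by norm_cast; omega)] at h
  · have h := A.br_mem_span_bracketsAvoiding (μ := wt (L n)) (L_mem_gens (a := n - 1) (by omega))
      (L_mem_gens one_ne_zero) (by simp [wt_eq_wt_iff]) (by simp [wt_eq_wt_iff]; omega)
    have e : A.br (A.basis (L (n - 1))) (A.basis (L 1)) = ((n : ℂ) - 2) • A.basis (L n) := by
      rw [A.br_L_L, sub_add_cancel, if_neg hn.ne]
      simp; module
    rwa [e, Submodule.smul_mem_iff _ (by norm_cast; omega)] at h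

lemma basis_Q_mem_span_bracketsAvoiding (k : ℤ) :
    A.basis (Q k) ∈ Submodule.span ℂ (A.bracketsAvoiding (wt (Q k))) := by
  have h := A.br_mem_span_bracketsAvoiding (μ := wt (Q k)) (L_mem_gens two_ne_zero)
    (Q_mem_gens (k - 2))
    (by simp [wt_eq_wt_iff]; omega) (by simp [wt_eq_wt_iff])
  have e : A.br (A.basis (L 2)) (A.basis (Q (k - 2))) = ((5 / 2 : ℂ) - k) • A.basis (Q k) := by
    rw [A.br_L_Q, add_sub_cancel]; push_cast; ring_nf
  have hk : (5 / 2 : ℂ) - k ≠ 0 := by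
    intro h0
    have : ((2 * k : ℤ) : ℂ) = 5 := by push_cast; linear_combination (-2) * h0
    have : 2 * k = 5 := by exact_mod_cast this
    omega
  rwa [e, Submodule.smul_mem_iff _ hk] at h

lemma basis_mem_span_bracketsAvoiding (j : Idx) :
    A.basis j ∈ Submodule.span ℂ (A.bracketsAvoiding (wt j)) := by
  set S := Submodule.span ℂ (A.bracketsAvoiding (wt j))
  induction j using Idx.induction with
  | L n => exact A.basis_L_mem_span_bracketsAvoiding n
  | Q k => exact A.basis_Q_mem_span_bracketsAvoiding k
  | W n =>
    have h := A.br_mem_span_bracketsAvoiding (μ := wt (W n)) (Q_mem_gens n) (Q_mem_gens (-1))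
      (by simp [wt_eq_wt_iff]) (by simp [wt_eq_wt_iff]; omega)
    have e : A.br (A.basis (Q n)) (A.basis (Q (-1))) = (2 : ℂ) • A.basis (W n) := by
      rw [A.br_Q_Q, neg_add_cancel_right]
      split_ifs with h0
      · subst h0; norm_num
      · simp
    rwa [e, Submodule.smul_mem_iff _ two_ne_zero] at h
  | C1 =>
    have e : A.basis C1 = (2 : ℂ) • A.br (A.basis (L 2)) (A.basis (L (-2))) -
        (4 : ℂ) • A.br (A.basis (L 1)) (A.basis (L (-1))) := by
      rw [A.br_L_L, A.br_L_L]; norm_num; module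
    rw [e]
    refine S.sub_mem (S.smul_mem _ (A.br_mem_span_bracketsAvoiding (L_mem_gens two_ne_zero)
      (L_mem_gens (by norm_num)) ?_ ?_)) (S.smul_mem _ (A.br_mem_span_bracketsAvoiding
      (L_mem_gens one_ne_zero) (L_mem_gens (by norm_num)) ?_ ?_)) <;> simp [wt_eq_wt_iff]
  | C2 =>
    have e : A.basis C2 = (3 / 2 : ℂ) • (A.br (A.basis (Q 1)) (A.basis (Q (-2))) -
        A.br (A.basis (Q 0)) (A.basis (Q (-1)))) := by
      rw [A.br_Q_Q, A.br_Q_Q]; norm_num; module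
    rw [e]
    refine S.smul_mem _ (S.sub_mem (A.br_mem_span_bracketsAvoiding (Q_mem_gens 1)
      (Q_mem_gens (-2)) ?_ ?_) (A.br_mem_span_bracketsAvoiding (Q_mem_gens 0)
      (Q_mem_gens (-1)) ?_ ?_)) <;> simp [wt_eq_wt_iff]

structure SymmRightSuperderivation where
  φ : V →ₗ[ℂ] V →ₗ[ℂ] V
  d : ZMod 2
  apply_br : ∀ p q t : ZMod 2, ∀ x ∈ A.grading p, ∀ y ∈ A.grading q, ∀ z ∈ A.grading t,
    φ x (A.br y z) =
      parSign ((d + p) * q) • A.br y (φ x z) - parSign (t * (d + p + q)) • A.br z (φ x y)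
  symm : ∀ p q : ZMod 2, ∀ x ∈ A.grading p, ∀ y ∈ A.grading q, φ x y = parSign (p * q) • φ y x

namespace SymmRightSuperderivation

variable {A} (D : A.SymmRightSuperderivation)

noncomputable def ψ (x : V) : V := D.φ x (A.basis (L 0))

lemma wt_smul_apply_basis (i j : Idx) :
    wt j • D.φ (A.basis i) (A.basis j) = A.br (A.basis (L 0)) (D.φ (A.basis i) (A.basis j)) -
      parSign (j.parity * (D.d + i.parity)) • A.br (A.basis j) (D.ψ (A.basis i)) := by
  have h := D.apply_br i.parity 0 j.parity _ (A.basis_mem_grading i) _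
    (A.basis_mem_grading (L 0)) _ (A.basis_mem_grading j)
  rw [br_L_zero, map_smul] at h
  simpa [ψ] using h

lemma sub_wt_mul_repr_apply_basis (i j l : Idx) :
    (wt j - wt l) * A.basis.repr (D.φ (A.basis i) (A.basis j)) l =
      -(parSign (j.parity * (D.d + i.parity)) *
        A.basis.repr (A.br (A.basis j) (D.ψ (A.basis i))) l) := by
  have h := congrArg (fun v => A.basis.repr v l) (D.wt_smul_apply_basis i j)
  simp only [map_smul, map_sub, Finsupp.smul_apply, Finsupp.sub_apply, smul_eq_mul,
    repr_br_L_zero] at h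
  linear_combination h

lemma apply_L_comm (m : ℤ) (j : Idx) :
    D.φ (A.basis (L m)) (A.basis j) = D.φ (A.basis j) (A.basis (L m)) := by
  simpa using D.symm 0 _ _ (A.basis_mem_grading (L m)) _ (A.basis_mem_grading j)

lemma repr_ψ_basis_LW_zero {e : ℤ → Idx} (he : e = L ∨ e = W) (i : Idx) :
    A.basis.repr (D.ψ (A.basis i)) (e 0) = 0 := by
  have h := D.sub_wt_mul_repr_apply_basis i (L 1) (e 1)
  rw [A.repr_br_L_LW he, wt_LW he] at h
  simpa [wt, parSign_ne_zero] using h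

lemma repr_ψ_L_zero_LW {e : ℤ → Idx} (he : e = L ∨ e = W) (r : ℤ) :
    A.basis.repr (D.ψ (A.basis (L 0))) (e r) = 0 := by
  rcases eq_or_ne r 0 with rfl | hr
  · exact D.repr_ψ_basis_LW_zero he _
  have h := D.sub_wt_mul_repr_apply_basis (L 0) (L (-r)) (e 0)
  rw [D.apply_L_comm, ← ψ, D.repr_ψ_basis_LW_zero he, A.repr_br_L_LW he, sub_neg_eq_add,
    zero_add] at h
  simpa [show (r : ℂ) ≠ 0 by exact_mod_cast hr] using h

lemma repr_ψ_L_zero_Q (k : ℤ) : A.basis.repr (D.ψ (A.basis (L 0))) (Q k) = 0 := by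
  have h := D.sub_wt_mul_repr_apply_basis (L 0) (Q (-k - 1)) (W 0)
  rw [D.apply_L_comm, ← ψ, D.repr_ψ_basis_LW_zero (Or.inr rfl), A.repr_br_Q_W,
    show (0 : ℤ) - (-k - 1) - 1 = k by ring] at h
  simpa [parSign_ne_zero] using h

lemma br_basis_ψ_L_zero (j : Idx) : A.br (A.basis j) (D.ψ (A.basis (L 0))) = 0 :=
  A.br_basis_eq_zero_of_repr (D.repr_ψ_L_zero_LW (Or.inl rfl))
    (D.repr_ψ_L_zero_LW (Or.inr rfl)) D.repr_ψ_L_zero_Q j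

lemma repr_ψ_basis_of_wt_ne {j l : Idx} (h : wt l ≠ wt j) :
    A.basis.repr (D.ψ (A.basis j)) l = 0 := by
  have h' := D.sub_wt_mul_repr_apply_basis (L 0) j l
  rw [D.apply_L_comm, ← ψ, br_basis_ψ_L_zero] at h'
  simpa [sub_ne_zero.mpr h.symm] using h'

lemma repr_ψ_L_self_LW {e : ℤ → Idx} (he : e = L ∨ e = W) (m : ℤ) :
    A.basis.repr (D.ψ (A.basis (L m))) (e m) = 0 := by
  refine eq_zero_of_forall_sub_mul_add_mul
    (f := fun m => A.basis.repr (D.ψ (A.basis (L m))) (e m)) (fun m n => ?_) m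
  have hmn := D.sub_wt_mul_repr_apply_basis (L m) (L n) (e (m + n))
  have hnm := D.sub_wt_mul_repr_apply_basis (L n) (L m) (e (m + n))
  rw [A.repr_br_L_LW he, add_sub_cancel_right] at hmn
  rw [A.repr_br_L_LW he, add_sub_cancel_left, D.apply_L_comm n] at hnm
  rw [wt_LW he] at hmn hnm
  simp only [wt, deg2_L, parity_L, zero_mul, parSign_zero, one_mul] at hmn hnm
  push_cast at hmn hnm
  linear_combination n * hmn - m * hnm

lemma ψ_L_eq_zero {a : ℤ} (ha : a ≠ 0) : D.ψ (A.basis (L a)) = 0 := by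
  refine A.basis.forall_coord_eq_zero_iff.mp fun l => ?_
  rw [Module.Basis.coord_apply]
  by_cases h : wt l = wt (L a)
  · rw [wt_eq_wt_iff] at h
    induction l using Idx.induction with
    | L r =>
      obtain rfl : r = a := by simpa using h
      exact D.repr_ψ_L_self_LW (Or.inl rfl) r
    | W r =>
      obtain rfl : r = a := by simpa using h
      exact D.repr_ψ_L_self_LW (Or.inr rfl) r
    | C1 | C2 | Q _ => simp at h; omega
  · exact D.repr_ψ_basis_of_wt_ne h

lemma apply_Q_self (k : ℤ) : D.φ (A.basis (Q k)) (A.basis (Q k)) = 0 := by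
  have h := D.symm 1 1 _ (A.basis_mem_grading (Q k)) _ (A.basis_mem_grading (Q k))
  rw [mul_one, parSign_one, neg_one_smul, eq_neg_iff_add_eq_zero, ← two_smul ℂ] at h
  exact (smul_eq_zero.mp h).resolve_left two_ne_zero

lemma ψ_Q_eq_zero (k : ℤ) : D.ψ (A.basis (Q k)) = 0 := by
  refine A.basis.forall_coord_eq_zero_iff.mp fun l => ?_
  rw [Module.Basis.coord_apply]
  by_cases h : wt l = wt (Q k)
  · rw [wt_eq_wt_iff] at h
    induction l using Idx.induction with
    | L _ | W _ | C1 | C2 => simp at h; omega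
    | Q j =>
      obtain rfl : j = k := by simp at h; omega
      have h' := D.sub_wt_mul_repr_apply_basis (Q j) (Q j) (W (2 * j + 1))
      rw [D.apply_Q_self, A.repr_br_Q_W, show 2 * j + 1 - j - 1 = j by ring] at h'
      simpa [parSign_ne_zero] using h'
  · exact D.repr_ψ_basis_of_wt_ne h

lemma apply_basis_eq_zero_of_apply_gens {p : ZMod 2} {x : V} (hx : x ∈ A.grading p) (j : Idx)
    (h : ∀ u ∈ gens, wt u ≠ wt j → D.φ x (A.basis u) = 0) : D.φ x (A.basis j) = 0 := by
  refine (Submodule.span_le (p := LinearMap.ker (D.φ x)) |>.mpr ?_)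
    (A.basis_mem_span_bracketsAvoiding j)
  rintro _ ⟨u, hu, w, hw, hu', hw', rfl⟩
  rw [SetLike.mem_coe, LinearMap.mem_ker, D.apply_br p _ _ x hx _ (A.basis_mem_grading u) _
    (A.basis_mem_grading w), h u hu hu', h w hw hw', map_zero, map_zero, smul_zero, smul_zero,
    sub_zero]

lemma ψ_eq_zero (j : Idx) : D.ψ (A.basis j) = 0 := by
  rw [ψ, ← D.apply_L_comm]
  refine D.apply_basis_eq_zero_of_apply_gens (A.basis_mem_grading (L 0)) j ?_
  rintro _ (⟨a, ha, rfl⟩ | ⟨k, rfl⟩) -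
  · rw [D.apply_L_comm, ← ψ, D.ψ_L_eq_zero ha]
  · rw [D.apply_L_comm, ← ψ, D.ψ_Q_eq_zero]

lemma apply_basis_eq_zero_of_wt_ne {i j : Idx} (h : wt i ≠ wt j) :
    D.φ (A.basis i) (A.basis j) = 0 := by
  have hij := D.wt_smul_apply_basis i j
  have hji := D.wt_smul_apply_basis j i
  rw [D.ψ_eq_zero, map_zero, smul_zero, sub_zero] at hij hji
  rw [D.symm _ _ _ (A.basis_mem_grading j) _ (A.basis_mem_grading i), map_smul,
    smul_comm] at hji
  have hji' := smul_right_injective V (parSign_ne_zero (j.parity * i.parity)) hji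
  have : (wt i - wt j) • D.φ (A.basis i) (A.basis j) = 0 := by
    rw [sub_smul, hij, hji', sub_self]
  exact (smul_eq_zero.mp this).resolve_left (sub_ne_zero.mpr h)

theorem eq_zero : D.φ = 0 := by
  refine A.basis.ext fun i => A.basis.ext fun j => ?_
  by_cases h : wt i = wt j
  · exact D.apply_basis_eq_zero_of_apply_gens (A.basis_mem_grading i) j
      fun u _ hu => D.apply_basis_eq_zero_of_wt_ne (h ▸ hu.symm)
  · exact D.apply_basis_eq_zero_of_wt_ne h

end SymmRightSuperderivation

end SuperBMS3

theorem symmetric_superbiderivation_BMS3_trivial_general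
    (V : Type) [AddCommGroup V] [Module ℂ V]
    (bV : Module.Basis (((ℤ ⊕ ℤ) ⊕ (Unit ⊕ Unit)) ⊕ ℤ) ℂ V)
    (br : V →ₗ[ℂ] V →ₗ[ℂ] V)
    (L : ℤ → V) (W : ℤ → V) (C1 : V) (C2 : V) (Q : ℤ → V)
    (hLdef : ∀ m : ℤ, L m = bV (Sum.inl (Sum.inl (Sum.inl m))))
    (hWdef : ∀ m : ℤ, W m = bV (Sum.inl (Sum.inl (Sum.inr m))))
    (hC1def : C1 = bV (Sum.inl (Sum.inr (Sum.inl ()))))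
    (hC2def : C2 = bV (Sum.inl (Sum.inr (Sum.inr ()))))
    (hQdef : ∀ k : ℤ, Q k = bV (Sum.inr k))
    (Vsub : ZMod 2 → Submodule ℂ V)
    (hV0 : Vsub 0 = Submodule.span ℂ (Set.range (fun i : (ℤ ⊕ ℤ) ⊕ (Unit ⊕ Unit) => bV (Sum.inl i))))
    (hV1 : Vsub 1 = Submodule.span ℂ (Set.range (fun j : ℤ => bV (Sum.inr j))))
    (sgn : ZMod 2 → ℂ) (hsgn : ∀ p : ZMod 2, sgn p = if p = 1 then -1 else 1)
    (hLL : ∀ m n : ℤ, br (L m) (L n) = ((m : ℂ) - n) • L (m + n) +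
      (if m + n = 0 then ((m : ℂ) ^ 3 - m) / 12 else 0) • C1)
    (hLW : ∀ m n : ℤ, br (L m) (W n) = ((m : ℂ) - n) • W (m + n) +
      (if m + n = 0 then ((m : ℂ) ^ 3 - m) / 12 else 0) • C2)
    (hQQ : ∀ k l : ℤ, br (Q k) (Q l) = (2 : ℂ) • W (k + l + 1) +
      (if k + l + 1 = 0 then (((k : ℂ) + 1 / 2) ^ 2 - 1 / 4) / 3 else 0) • C2)
    (hLQ : ∀ m k : ℤ, br (L m) (Q k) = ((m : ℂ) / 2 - ((k : ℂ) + 1 / 2)) • Q (m + k))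
    (hWQ : ∀ m k : ℤ, br (W m) (Q k) = 0)
    (hC1x : ∀ x : V, br C1 x = 0)
    (hC2x : ∀ x : V, br C2 x = 0)
    (hskew : ∀ p q : ZMod 2, ∀ x ∈ Vsub p, ∀ y ∈ Vsub q,
      br x y = (-(sgn (p * q))) • br y x)
    (φ : V →ₗ[ℂ] V →ₗ[ℂ] V) (d : ZMod 2)
    (hbd2 : ∀ p q t : ZMod 2, ∀ x ∈ Vsub p, ∀ y ∈ Vsub q, ∀ z ∈ Vsub t,
      φ x (br y z) = sgn ((d + p) * q) • br y (φ x z) - sgn (t * (d + p + q)) • br z (φ x y))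
    (hsym : ∀ p q : ZMod 2, ∀ x ∈ Vsub p, ∀ y ∈ Vsub q, φ x y = sgn (p * q) • φ y x) :
    ∀ x y : V, φ x y = 0 := by
  obtain rfl : sgn = SuperBMS3.parSign := funext hsgn
  obtain rfl : L = fun m => bV (SuperBMS3.Idx.L m) := funext hLdef
  obtain rfl : W = fun m => bV (SuperBMS3.Idx.W m) := funext hWdef
  obtain rfl : Q = fun k => bV (SuperBMS3.Idx.Q k) := funext hQdef
  subst hC1def hC2def
  let A : SuperBMS3 V := ⟨bV, br, Vsub, hV0, hV1, hLL, hLW, hQQ, hLQ, hWQ, hC1x, hC2x, hskew⟩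
  intro x y
  exact LinearMap.congr_fun (LinearMap.congr_fun
    (SuperBMS3.SymmRightSuperderivation.eq_zero (A := A) ⟨φ, d, hbd2, hsym⟩) x) y

theorem symmetric_superbiderivation_BMS3_trivial
    (V : Type) [AddCommGroup V] [Module ℂ V]
    (bV : Module.Basis (((ℤ ⊕ ℤ) ⊕ (Unit ⊕ Unit)) ⊕ ℤ) ℂ V)
    (br : V →ₗ[ℂ] V →ₗ[ℂ] V)
    (L : ℤ → V) (W : ℤ → V) (C1 : V) (C2 : V) (Q : ℤ → V)
    (hLdef : ∀ m : ℤ, L m = bV (Sum.inl (Sum.inl (Sum.inl m))))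
    (hWdef : ∀ m : ℤ, W m = bV (Sum.inl (Sum.inl (Sum.inr m))))
    (hC1def : C1 = bV (Sum.inl (Sum.inr (Sum.inl ()))))
    (hC2def : C2 = bV (Sum.inl (Sum.inr (Sum.inr ()))))
    (hQdef : ∀ k : ℤ, Q k = bV (Sum.inr k))
    (Vsub : ZMod 2 → Submodule ℂ V)
    (hV0 : Vsub 0 = Submodule.span ℂ (Set.range (fun i : (ℤ ⊕ ℤ) ⊕ (Unit ⊕ Unit) => bV (Sum.inl i))))
    (hV1 : Vsub 1 = Submodule.span ℂ (Set.range (fun j : ℤ => bV (Sum.inr j))))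
    (sgn : ZMod 2 → ℂ) (hsgn : ∀ p : ZMod 2, sgn p = if p = 1 then -1 else 1)
    (hLL : ∀ m n : ℤ, br (L m) (L n) = ((m : ℂ) - n) • L (m + n) +
      (if m + n = 0 then ((m : ℂ) ^ 3 - m) / 12 else 0) • C1)
    (hLW : ∀ m n : ℤ, br (L m) (W n) = ((m : ℂ) - n) • W (m + n) +
      (if m + n = 0 then ((m : ℂ) ^ 3 - m) / 12 else 0) • C2)
    (hQQ : ∀ k l : ℤ, br (Q k) (Q l) = (2 : ℂ) • W (k + l + 1) +
      (if k + l + 1 = 0 then (((k : ℂ) + 1 / 2) ^ 2 - 1 / 4) / 3 else 0) • C2)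
    (hLQ : ∀ m k : ℤ, br (L m) (Q k) = ((m : ℂ) / 2 - ((k : ℂ) + 1 / 2)) • Q (m + k))
    (hWW : ∀ m n : ℤ, br (W m) (W n) = 0)
    (hWQ : ∀ m k : ℤ, br (W m) (Q k) = 0)
    (hC1x : ∀ x : V, br C1 x = 0)
    (hC2x : ∀ x : V, br C2 x = 0)
    (hskew : ∀ p q : ZMod 2, ∀ x ∈ Vsub p, ∀ y ∈ Vsub q,
      br x y = (-(sgn (p * q))) • br y x)
    (φ : V →ₗ[ℂ] V →ₗ[ℂ] V) (d : ZMod 2)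
    (hhom : ∀ p q : ZMod 2, ∀ x ∈ Vsub p, ∀ y ∈ Vsub q, φ x y ∈ Vsub (p + q + d))
    (hbd1 : ∀ p q t : ZMod 2, ∀ x ∈ Vsub p, ∀ y ∈ Vsub q, ∀ z ∈ Vsub t,
      φ (br x y) z = sgn (d * p) • br x (φ y z) - sgn (q * (d + p)) • br y (φ x z))
    (hbd2 : ∀ p q t : ZMod 2, ∀ x ∈ Vsub p, ∀ y ∈ Vsub q, ∀ z ∈ Vsub t,
      φ x (br y z) = sgn ((d + p) * q) • br y (φ x z) - sgn (t * (d + p + q)) • br z (φ x y))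
    (hsym : ∀ p q : ZMod 2, ∀ x ∈ Vsub p, ∀ y ∈ Vsub q, φ x y = sgn (p * q) • φ y x) :
    ∀ x y : V, φ x y = 0 :=
  symmetric_superbiderivation_BMS3_trivial_general V bV br L W C1 C2 Q hLdef hWdef hC1def hC2def
    hQdef Vsub hV0 hV1 sgn hsgn hLL hLW hQQ hLQ hWQ hC1x hC2x hskew φ d hbd2 hsym
end
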